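/- arXiv:1810.12588 — 8 statements merged into one kernel-verified Lean document; each statement's English description precedes it below -/
import Mathlib

section
/- Let f(x,y) = Σ_{i=0}^D C(D,i) a_i x^i y^{D-i} with a_i in a field K of characteristic zero, and let c = (c_0,...,c_r) be a nonzero vector in K^{r+1} such that the binary form P_c = Σ_{i=0}^r c_i x^i y^{r-i} is square-free with factorization ∏_{j=1}^r (β_j x − α_j y) over the algebraic closure of K. Then there exist λ_1,...,λ_r in the algebraic closure of K with f(x,y) = Σ_{j=1}^r λ_j (α_j x + β_j y)^D if and only if c lies in the kernel of the Hankel matrix H^r_a with entries (H^r_a)_{i,j} = a_{i+j} of size (D−r+1)×(r+1). -/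
/-!
Over the algebraic closure `L`, comparing coefficients turns `f = ∑ λⱼ (αⱼ x + βⱼ y)^D` into
`aᵢ = ∑ⱼ λⱼ αⱼ^i βⱼ^(D-i)` for `i ≤ D`. Since `P_c(αⱼ, βⱼ) = 0`, each such sequence satisfies
the linear recurrence `∑ₖ cₖ a_{i+k} = 0`, which is the Hankel condition. Conversely, the
solutions of the recurrence form an `r`-dimensional subspace of `L^{D+1}`: its matrix has a lower
triangular maximal minor whose diagonal is the last nonzero `c_s`. The `r` sequences
`(αⱼ^i βⱼ^(D-i))ᵢ` are independent solutions, hence span it: pairing with the coefficients of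
`∏_{j ≠ j₀} (βⱼ x - αⱼ y)` annihilates all of them but the `j₀`-th, because squarefreeness makes
the points `(αⱼ : βⱼ)` pairwise distinct.
-/

/-- Pad a finite vector to a function on `ℕ` by zeros. -/
noncomputable def pad {K : Type*} [Zero K] {n : ℕ} (c : Fin n → K) : ℕ → K :=
  fun i => if h : i < n then c ⟨i, h⟩ else 0

/-- The Hankel matrix `H^k_a ∈ K^{(D-k+1)×(k+1)}` with `(i,j)` entry `a_{i+j}`. -/
noncomputable def hankel {K : Type*} [Field K] (a : ℕ → K) (D k : ℕ) :
    Matrix (Fin (D - k + 1)) (Fin (k + 1)) K :=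
  fun i j => a (i.1 + j.1)

/-- The binary form `P_v = ∑ v_i x^i y^{n-i}`. -/
noncomputable def binForm (K : Type*) [Field K] (v : ℕ → K) (n : ℕ) :
    MvPolynomial (Fin 2) K :=
  ∑ i ∈ Finset.range (n + 1),
    MvPolynomial.C (v i) * MvPolynomial.X 0 ^ i * MvPolynomial.X 1 ^ (n - i)

namespace Sylvester

open MvPolynomial Finset
open scoped Matrix

variable {L : Type*} [Field L] {σ : Type*} {x y : σ}

/- Outside `binForm`, the `X 0` and `X 1` of the main statement are variables indexed by `ℕ`, not
by `Fin 2`. -/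
noncomputable def binaryForm (x y : σ) (v : ℕ → L) (n : ℕ) : MvPolynomial σ L :=
  ∑ i ∈ range (n + 1), C (v i) * X x ^ i * X y ^ (n - i)

lemma binForm_eq_binaryForm (v : ℕ → L) (n : ℕ) : binForm L v n = binaryForm 0 1 v n := rfl

lemma single_add_single_inj (hxy : x ≠ y) {i j i' j' : ℕ} :
    Finsupp.single x i + Finsupp.single y j = Finsupp.single x i' + Finsupp.single y j'
      ↔ i = i' ∧ j = j' := by
  refine ⟨fun h => ⟨?_, ?_⟩, fun h => by rw [h.1, h.2]⟩
  · simpa [hxy] using DFunLike.congr_fun h x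
  · simpa [hxy.symm] using DFunLike.congr_fun h y

lemma coeff_binaryForm (hxy : x ≠ y) (v : ℕ → L) (n i j : ℕ) :
    coeff (Finsupp.single x i + Finsupp.single y j) (binaryForm x y v n)
      = if i + j = n then v i else 0 := by
  classical
  simp only [binaryForm, coeff_sum, mul_assoc, coeff_C_mul, X_pow_eq_monomial, monomial_mul,
    coeff_monomial, single_add_single_inj hxy, mul_ite, mul_one, mul_zero]
  split_ifs with h
  · rw [sum_eq_single_of_mem i (mem_range.mpr (by omega)) fun k _ hk => if_neg fun h' => hk h'.1,
      if_pos ⟨rfl, by omega⟩]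
  · exact sum_eq_zero fun k hk => if_neg fun h' => h (by have := mem_range.mp hk; omega)

lemma binaryForm_inj (hxy : x ≠ y) {v w : ℕ → L} {n : ℕ} :
    binaryForm x y v n = binaryForm x y w n ↔ ∀ i ≤ n, v i = w i := by
  refine ⟨fun h i hi => ?_, fun h => sum_congr rfl fun i hi => by
    rw [h i (Nat.lt_succ_iff.mp (mem_range.mp hi))]⟩
  have := congrArg (coeff (Finsupp.single x i + Finsupp.single y (n - i))) h
  simpa only [coeff_binaryForm hxy, Nat.add_sub_cancel' hi, if_true] using this

lemma binaryForm_choose_mul_inj [CharZero L] (hxy : x ≠ y) {v w : ℕ → L} {D : ℕ} :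
    binaryForm x y (fun n => D.choose n * v n) D = binaryForm x y (fun n => D.choose n * w n) D
      ↔ ∀ n ≤ D, v n = w n := by
  rw [binaryForm_inj hxy]
  exact forall₂_congr fun n hn => mul_right_inj' (Nat.cast_ne_zero.mpr (Nat.choose_pos hn).ne')

lemma map_binaryForm {K : Type*} [Field K] (φ : K →+* L) (v : ℕ → K) (n : ℕ) :
    MvPolynomial.map φ (binaryForm x y v n) = binaryForm x y (fun i => φ (v i)) n := by
  simp [binaryForm]

lemma eval_binForm (v : ℕ → L) (n : ℕ) (a b : L) :
    eval ![a, b] (binForm L v n) = ∑ k ∈ range (n + 1), v k * a ^ k * b ^ (n - k) := by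
  simp [binForm]

lemma exists_binForm_eq_of_isHomogeneous {p : MvPolynomial (Fin 2) L} {n : ℕ}
    (hp : p.IsHomogeneous n) : ∃ v, binForm L v n = p := by
  refine ⟨fun k => coeff (Finsupp.single 0 k + Finsupp.single 1 (n - k)) p, ?_⟩
  ext d
  have hd : d = Finsupp.single 0 (d 0) + Finsupp.single 1 (d 1) := by
    ext k
    fin_cases k <;> simp
  rw [hd, binForm_eq_binaryForm, coeff_binaryForm zero_ne_one]
  split_ifs with hdeg
  · rw [← hdeg, Nat.add_sub_cancel_left]
  · refine (hp.coeff_eq_zero ?_).symm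
    simpa [Finsupp.degree_eq_sum] using hdeg

noncomputable def linearForm (a b : L) : MvPolynomial (Fin 2) L := C b * X 0 - C a * X 1

lemma eval_linearForm (a b s t : L) : eval ![s, t] (linearForm a b) = b * s - a * t := by
  simp [linearForm]

lemma isHomogeneous_linearForm (a b : L) : (linearForm a b).IsHomogeneous 1 :=
  ((isHomogeneous_X L 0).C_mul b).sub ((isHomogeneous_X L 1).C_mul a)

lemma not_isUnit_linearForm (a b : L) : ¬IsUnit (linearForm a b) := fun h => by
  simpa [eval_linearForm, mul_comm] using h.map (eval ![a, b])

lemma C_mul_linearForm (u a b : L) : C u * linearForm a b = linearForm (u * a) (u * b) := by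
  simp only [linearForm, C_mul]
  ring

lemma linearForm_dvd {a b a' b' : L} (hab : a ≠ 0 ∨ b ≠ 0) (h : b' * a - a' * b = 0) :
    linearForm a b ∣ linearForm a' b' := by
  rcases hab with ha | hb
  · refine ⟨C (a' / a), ?_⟩
    rw [mul_comm, C_mul_linearForm]
    congr 1 <;> field_simp
    linear_combination h
  · refine ⟨C (b' / b), ?_⟩
    rw [mul_comm, C_mul_linearForm]
    congr 1 <;> field_simp
    linear_combination -h

lemma exists_eval_binForm_eq_prod_erase {ι : Type*} [Fintype ι] [DecidableEq ι] (α β : ι → L)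
    (j₀ : ι) :
    ∃ q : ℕ → L, ∀ j, eval ![α j, β j] (binForm L q (Fintype.card ι - 1))
      = ∏ j' ∈ univ.erase j₀, (β j' * α j - α j' * β j) := by
  have hhom := IsHomogeneous.prod (univ.erase j₀) (fun j => linearForm (α j) (β j)) (fun _ => 1)
    fun j _ => isHomogeneous_linearForm (α j) (β j)
  simp only [sum_const, card_erase_of_mem (mem_univ j₀), card_univ, smul_eq_mul, mul_one] at hhom
  obtain ⟨q, hq⟩ := exists_binForm_eq_of_isHomogeneous hhom
  refine ⟨q, fun j => ?_⟩
  rw [hq, eval_prod]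
  simp only [eval_linearForm]

section ProductOfLinearForms

variable {ι : Type*} [Fintype ι] {α β : ι → L}

lemma eval_prod_linearForm_eq_zero (j : ι) :
    eval ![α j, β j] (∏ j, linearForm (α j) (β j)) = 0 := by
  rw [eval_prod]
  exact prod_eq_zero (mem_univ j) (by rw [eval_linearForm]; ring)

lemma ne_zero_or_ne_zero_of_squarefree_prod (h : Squarefree (∏ j, linearForm (α j) (β j)))
    (j : ι) : α j ≠ 0 ∨ β j ≠ 0 := by
  by_contra! hj
  refine h.ne_zero (prod_eq_zero (mem_univ j) ?_)
  simp [linearForm, hj.1, hj.2]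

lemma pairwise_cross_ne_zero_of_squarefree_prod (h : Squarefree (∏ j, linearForm (α j) (β j))) :
    Pairwise fun j j' => β j' * α j - α j' * β j ≠ 0 := by
  classical
  intro j j' hjj' hdep
  have hdvd : linearForm (α j) (β j) ∣ linearForm (α j') (β j') :=
    linearForm_dvd (ne_zero_or_ne_zero_of_squarefree_prod h j) hdep
  have hpair : linearForm (α j) (β j) * linearForm (α j') (β j') ∣ ∏ i, linearForm (α i) (β i) := by
    rw [← prod_pair (f := fun i => linearForm (α i) (β i)) hjj']
    exact prod_dvd_prod_of_subset _ _ _ (subset_univ _)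
  exact not_isUnit_linearForm (α j) (β j) (h _ ((mul_dvd_mul_left _ hdvd).trans hpair))

end ProductOfLinearForms

section PowerSums

variable {ι : Type*} [Fintype ι]

def powerSum (μ α β : ι → L) (D : ℕ) : ℕ → L :=
  fun n => ∑ j, μ j * α j ^ n * β j ^ (D - n)

lemma sum_C_mul_linear_pow (μ α β : ι → L) (D : ℕ) :
    ∑ j, C (μ j) * (C (α j) * X x + C (β j) * X y) ^ D
      = binaryForm x y (fun n => D.choose n * powerSum μ α β D n) D := by
  simp only [add_pow, mul_sum, binaryForm, powerSum]
  rw [sum_comm]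
  refine sum_congr rfl fun n _ => ?_
  simp only [mul_pow, ← C_pow, map_mul, map_sum, map_natCast, sum_mul]
  refine sum_congr rfl fun j _ => ?_
  ring

lemma sum_mul_powerSum_add (μ α β : ι → L) (q : ℕ → L) {D m i : ℕ} (h : i + m ≤ D) :
    ∑ k ∈ range (m + 1), q k * powerSum μ α β D (i + k)
      = ∑ j, μ j * α j ^ i * β j ^ (D - m - i) * eval ![α j, β j] (binForm L q m) := by
  simp only [powerSum, eval_binForm, mul_sum]
  rw [sum_comm]
  refine sum_congr rfl fun j _ => sum_congr rfl fun k hk => ?_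
  have hk : k ≤ m := Nat.lt_succ_iff.mp (mem_range.mp hk)
  rw [show D - (i + k) = (D - m - i) + (m - k) by omega, pow_add, pow_add]
  ring

lemma hankel_mulVec_apply {r D : ℕ} (b : ℕ → L) (c : Fin (r + 1) → L) (i : Fin (D - r + 1)) :
    (hankel b D r *ᵥ c) i = ∑ k ∈ range (r + 1), pad c k * b (i + k) := by
  rw [← Fin.sum_univ_eq_sum_range]
  simp [hankel, Matrix.mulVec, dotProduct, pad, mul_comm, Fin.is_le]

lemma hankel_mulVec_eq_zero_of_eq_powerSum {r D : ℕ} (hrD : r ≤ D) {c : Fin (r + 1) → L}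
    {μ α β : ι → L} (hroot : ∀ j, eval ![α j, β j] (binForm L (pad c) r) = 0) {b : ℕ → L}
    (hb : ∀ n ≤ D, b n = powerSum μ α β D n) : hankel b D r *ᵥ c = 0 := by
  ext i
  have hi : i.1 + r ≤ D := by omega
  rw [hankel_mulVec_apply, Pi.zero_apply,
    sum_congr rfl fun k hk => by rw [hb _ (by have := mem_range.mp hk; omega)],
    sum_mul_powerSum_add μ α β _ hi]
  simp [hroot]

lemma eq_zero_of_powerSum_eq_zero {D : ℕ} (hD : Fintype.card ι ≤ D + 1)
    {α β : ι → L} (hne : ∀ j, α j ≠ 0 ∨ β j ≠ 0)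
    (hdist : Pairwise fun j j' => β j' * α j - α j' * β j ≠ 0)
    {μ : ι → L} (h : ∀ n ≤ D, powerSum μ α β D n = 0) : μ = 0 := by
  classical
  funext j₀
  set m := Fintype.card ι - 1
  have hm : m + 1 ≤ D + 1 := by have := Fintype.card_pos_iff.mpr ⟨j₀⟩; omega
  obtain ⟨q, hq⟩ := exists_eval_binForm_eq_prod_erase α β j₀
  have hj₀ : ∀ i, i + m ≤ D → μ j₀ * (α j₀ ^ i * β j₀ ^ (D - m - i) *
      ∏ j' ∈ univ.erase j₀, (β j' * α j₀ - α j' * β j₀)) = 0 := by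
    intro i hi
    have hsum := sum_mul_powerSum_add μ α β q hi
    rw [Fintype.sum_eq_single j₀ fun j hj => by
      rw [hq, prod_eq_zero (mem_erase.mpr ⟨hj, mem_univ j⟩) (by ring), mul_zero], hq] at hsum
    rw [← mul_assoc, ← mul_assoc, ← hsum]
    exact sum_eq_zero fun k hk => by rw [h _ (by have := mem_range.mp hk; omega), mul_zero]
  have hprod : ∏ j' ∈ univ.erase j₀, (β j' * α j₀ - α j' * β j₀) ≠ 0 :=
    prod_ne_zero_iff.mpr fun j' hj' => hdist (ne_of_mem_erase hj').symm
  obtain ⟨i, hi, hpow⟩ : ∃ i, i + m ≤ D ∧ α j₀ ^ i * β j₀ ^ (D - m - i) ≠ 0 := by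
    rcases hne j₀ with hα | hβ
    · exact ⟨D - m, by omega, by simp [hα]⟩
    · exact ⟨0, by omega, by simp [hβ]⟩
  exact (mul_eq_zero.mp (hj₀ i hi)).resolve_right (mul_ne_zero hpow hprod)

def powerSumMap (α β : ι → L) (D : ℕ) : (ι → L) →ₗ[L] (Fin (D + 1) → L) where
  toFun μ n := powerSum μ α β D n
  map_add' _ _ := by ext; simp [powerSum, add_mul, sum_add_distrib]
  map_smul' _ _ := by ext; simp [powerSum, mul_sum, mul_assoc]

end PowerSums

section Recurrence

variable {r : ℕ}

def recurrenceMatrix (c : Fin (r + 1) → L) (D : ℕ) : Matrix (Fin (D - r + 1)) (Fin (D + 1)) L :=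
  Matrix.of fun i n => ∑ k : Fin (r + 1), if (n : ℕ) = i + k then c k else 0

lemma recurrenceMatrix_mulVec {D : ℕ} (hrD : r ≤ D) (c : Fin (r + 1) → L) (b : ℕ → L) :
    recurrenceMatrix c D *ᵥ (fun n : Fin (D + 1) => b n) = hankel b D r *ᵥ c := by
  ext i
  simp only [recurrenceMatrix, Matrix.mulVec, dotProduct, Matrix.of_apply, sum_mul, ite_mul,
    zero_mul]
  rw [sum_comm]
  refine sum_congr rfl fun k _ => ?_
  rw [Fintype.sum_eq_single ⟨i + k, by omega⟩ fun n hn => if_neg fun h => hn (Fin.ext h)]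
  simp [hankel, mul_comm]

lemma exists_last_ne_zero {M : Type*} [Zero M] {n : ℕ} {c : Fin n → M} (hc : c ≠ 0) :
    ∃ s, c s ≠ 0 ∧ ∀ k, s < k → c k = 0 := by
  classical
  have hsupp : (univ.filter fun k => c k ≠ 0).Nonempty := by
    obtain ⟨k, hk⟩ := Function.ne_iff.mp hc
    exact ⟨k, by simpa using hk⟩
  refine ⟨_, by simpa using max'_mem _ hsupp, fun k hk => ?_⟩
  by_contra h
  exact not_le.mpr hk (le_max' _ k (by simpa using h))

lemma rank_recurrenceMatrix {D : ℕ} (hrD : r ≤ D) {c : Fin (r + 1) → L} (hc : c ≠ 0) :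
    (recurrenceMatrix c D).rank = D - r + 1 := by
  obtain ⟨s, hs, hmax⟩ := exists_last_ne_zero hc
  set A := (recurrenceMatrix c D).submatrix id
    fun l : Fin (D - r + 1) => (⟨s + l, by omega⟩ : Fin (D + 1))
  have hA : ∀ i l, A i l = ∑ k : Fin (r + 1), if (s : ℕ) + l = i + k then c k else 0 :=
    fun _ _ => rfl
  have hlower : A.IsLowerTriangular := by
    intro i l hil
    have hil : i < l := OrderDual.toDual_lt_toDual.mp hil
    rw [hA]
    refine sum_eq_zero fun k _ => ite_eq_right_iff.mpr fun h => hmax k ?_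
    rw [Fin.lt_def]
    simp only [Fin.lt_def] at hil
    omega
  have hdiag : ∀ i, A i i = c s := by
    intro i
    rw [hA, Fintype.sum_eq_single s fun k hk => if_neg fun h => hk (Fin.ext (by omega))]
    simp [add_comm]
  have hdet : IsUnit A.det := by
    rw [Matrix.det_of_isLowerTriangular A hlower]
    exact isUnit_iff_ne_zero.mpr (prod_ne_zero_iff.mpr fun i _ => hdiag i ▸ hs)
  refine le_antisymm (by simpa using (recurrenceMatrix c D).rank_le_card_height) ?_
  calc D - r + 1 = A.rank := by
        simpa using (Matrix.rank_of_isUnit A ((Matrix.isUnit_iff_isUnit_det A).mpr hdet)).symm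
    _ ≤ (recurrenceMatrix c D).rank := Matrix.rank_submatrix_le _ _ _

lemma finrank_ker_recurrenceMatrix {D : ℕ} (hrD : r ≤ D) {c : Fin (r + 1) → L} (hc : c ≠ 0) :
    Module.finrank L (LinearMap.ker (recurrenceMatrix c D).mulVecLin) = r := by
  have := LinearMap.finrank_range_add_finrank_ker (recurrenceMatrix c D).mulVecLin
  change (recurrenceMatrix c D).rank + _ = _ at this
  rw [rank_recurrenceMatrix hrD hc, Module.finrank_fin_fun] at this
  omega

end Recurrence

section HankelKernel

variable {r D : ℕ} {c : Fin (r + 1) → L} {α β : Fin r → L}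

theorem exists_eq_powerSum_of_hankel_mulVec_eq_zero (hrD : r ≤ D) (hc : c ≠ 0)
    (hne : ∀ j, α j ≠ 0 ∨ β j ≠ 0) (hdist : Pairwise fun j j' => β j' * α j - α j' * β j ≠ 0)
    (hroot : ∀ j, eval ![α j, β j] (binForm L (pad c) r) = 0) {b : ℕ → L}
    (hb : hankel b D r *ᵥ c = 0) : ∃ μ, ∀ n ≤ D, b n = powerSum μ α β D n := by
  set N := powerSumMap α β D
  have hinj : Function.Injective N := by
    rw [← LinearMap.ker_eq_bot, Submodule.eq_bot_iff]
    intro μ hμ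
    refine eq_zero_of_powerSum_eq_zero (by simpa using hrD.trans D.le_succ) hne hdist
      fun n hn => congrFun hμ ⟨n, by omega⟩
  have hle : LinearMap.range N ≤ LinearMap.ker (recurrenceMatrix c D).mulVecLin := by
    rintro _ ⟨μ, rfl⟩
    rw [LinearMap.mem_ker, Matrix.mulVecLin_apply]
    exact (recurrenceMatrix_mulVec hrD c (powerSum μ α β D)).trans
      (hankel_mulVec_eq_zero_of_eq_powerSum hrD hroot fun _ _ => rfl)
  have heq := Submodule.eq_of_le_of_finrank_eq hle (by
    rw [LinearMap.finrank_range_of_inj hinj, finrank_ker_recurrenceMatrix hrD hc,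
      Module.finrank_fin_fun])
  obtain ⟨μ, hμ⟩ : (fun n : Fin (D + 1) => b n) ∈ LinearMap.range N := by
    rw [heq, LinearMap.mem_ker, Matrix.mulVecLin_apply, recurrenceMatrix_mulVec hrD, hb]
  exact ⟨μ, fun n hn => (congrFun hμ ⟨n, by omega⟩).symm⟩

theorem hankel_mulVec_eq_zero_iff (hrD : r ≤ D) (hc : c ≠ 0)
    (hne : ∀ j, α j ≠ 0 ∨ β j ≠ 0) (hdist : Pairwise fun j j' => β j' * α j - α j' * β j ≠ 0)
    (hroot : ∀ j, eval ![α j, β j] (binForm L (pad c) r) = 0) (b : ℕ → L) :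
    hankel b D r *ᵥ c = 0 ↔ ∃ μ, ∀ n ≤ D, b n = powerSum μ α β D n :=
  ⟨exists_eq_powerSum_of_hankel_mulVec_eq_zero hrD hc hne hdist hroot,
    fun ⟨_, hμ⟩ => hankel_mulVec_eq_zero_of_eq_powerSum hrD hroot hμ⟩

end HankelKernel

lemma hankel_map_mulVec_eq_zero_iff {K : Type*} [Field K] {r D : ℕ} {φ : K →+* L}
    (hφ : Function.Injective φ) (a : ℕ → K) (c : Fin (r + 1) → K) :
    hankel (fun n => φ (a n)) D r *ᵥ (fun k => φ (c k)) = 0 ↔ hankel a D r *ᵥ c = 0 := by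
  have hmap : hankel (fun n => φ (a n)) D r *ᵥ (fun k => φ (c k)) = φ ∘ (hankel a D r *ᵥ c) :=
    funext fun i => (RingHom.map_mulVec φ _ _ i).symm
  simp only [hmap, funext_iff, Function.comp_apply, Pi.zero_apply, map_eq_zero_iff φ hφ]

end Sylvester

open Sylvester in
theorem stmt0_general {K : Type*} [Field K] [CharZero K] (D r : ℕ) (hrD : r ≤ D)
    (a : ℕ → K) (c : Fin (r + 1) → K) (hc : c ≠ 0)
    (α β : Fin r → AlgebraicClosure K)
    (hfact : binForm (AlgebraicClosure K)
        (pad fun i => algebraMap K (AlgebraicClosure K) (c i)) r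
      = ∏ j : Fin r,
          (MvPolynomial.C (β j) * MvPolynomial.X 0 - MvPolynomial.C (α j) * MvPolynomial.X 1))
    (hsf : Squarefree (binForm (AlgebraicClosure K)
        (pad fun i => algebraMap K (AlgebraicClosure K) (c i)) r)) :
    (∃ lam : Fin r → AlgebraicClosure K,
      MvPolynomial.map (algebraMap K (AlgebraicClosure K))
          (∑ i ∈ Finset.range (D + 1),
            MvPolynomial.C ((D.choose i : K) * a i) * MvPolynomial.X 0 ^ i *
              MvPolynomial.X 1 ^ (D - i))
        = ∑ j : Fin r, MvPolynomial.C (lam j) *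
            (MvPolynomial.C (α j) * MvPolynomial.X 0 +
              MvPolynomial.C (β j) * MvPolynomial.X 1) ^ D)
    ↔ (hankel a D r).mulVec c = 0 := by
  set φ := algebraMap K (AlgebraicClosure K)
  have hP : binForm _ (pad fun i => φ (c i)) r = ∏ j, linearForm (α j) (β j) := hfact
  rw [hP] at hsf
  have hc' : (fun i => φ (c i)) ≠ 0 := fun h =>
    hc (funext fun i => φ.injective (by simpa using congrFun h i))
  rw [← hankel_map_mulVec_eq_zero_iff φ.injective, hankel_mulVec_eq_zero_iff hrD hc'
    (ne_zero_or_ne_zero_of_squarefree_prod hsf) (pairwise_cross_ne_zero_of_squarefree_prod hsf)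
    fun j => hP ▸ eval_prod_linearForm_eq_zero j]
  refine exists_congr fun μ => ?_
  change MvPolynomial.map φ (binaryForm 0 1 (fun n => (D.choose n : K) * a n) D) = _ ↔ _
  rw [map_binaryForm, sum_C_mul_linear_pow]
  simp only [map_mul, map_natCast]
  exact binaryForm_choose_mul_inj zero_ne_one

/-- Sylvester's theorem. -/
theorem stmt0 {K : Type*} [Field K] [CharZero K] (D r : ℕ) (hr : 1 ≤ r) (hrD : r ≤ D)
    (a : ℕ → K) (c : Fin (r + 1) → K) (hc : c ≠ 0)
    (α β : Fin r → AlgebraicClosure K)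
    (hfact : binForm (AlgebraicClosure K)
        (pad fun i => algebraMap K (AlgebraicClosure K) (c i)) r
      = ∏ j : Fin r,
          (MvPolynomial.C (β j) * MvPolynomial.X 0 - MvPolynomial.C (α j) * MvPolynomial.X 1))
    (hsf : Squarefree (binForm (AlgebraicClosure K)
        (pad fun i => algebraMap K (AlgebraicClosure K) (c i)) r)) :
    (∃ lam : Fin r → AlgebraicClosure K,
      MvPolynomial.map (algebraMap K (AlgebraicClosure K))
          (∑ i ∈ Finset.range (D + 1),
            MvPolynomial.C ((D.choose i : K) * a i) * MvPolynomial.X 0 ^ i *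
              MvPolynomial.X 1 ^ (D - i))
        = ∑ j : Fin r, MvPolynomial.C (lam j) *
            (MvPolynomial.C (α j) * MvPolynomial.X 0 +
              MvPolynomial.C (β j) * MvPolynomial.X 1) ^ D)
    ↔ (hankel a D r).mulVec c = 0 :=
  stmt0_general D r hrD a c hc α β hfact hsf
end

section
/- Let {H^k_a} be the family of Hankel matrices of a vector a = (a_0,...,a_D), with invariants N_1 ≤ N_2 as above. There exist vectors v ∈ K^{N_1+2} and w ∈ K^{N_2+2} such that: for 0 ≤ k ≤ N_1, ker(H^k_a) = {0}; for N_1 < k ≤ N_2, the shifted vectors U^0 v, ..., U^{k−N_1−1} v form a basis of ker(H^k_a); and for N_2 < k ≤ D, the shifts U^0 v,...,U^{k−N_1−1} v together with U^0 w,...,U^{k−N_2−1} w form a basis of ker(H^k_a), where U^i denotes prepending i zeros and appending the appropriate number of zeros to reach the required length k+1. -/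
/-- The `i`-th shift of a vector supported on `[0,n]`. -/
noncomputable def shiftVec {K : Type*} [Zero K] (v : ℕ → K) (i : ℕ) : ℕ → K :=
  fun t => if i ≤ t then v (t - i) else 0

/-!
Identify `u ∈ K^{k+1}` with `p = ∑ uⱼ Xʲ` and put `A = ∑_{m ≤ D} a_{D-m} X^m`: then `u ∈ ker H^k`
iff `deg p ≤ k` and the coefficients of `p * A` in degrees `k, …, D` vanish. On these spaces `V_k`
the shift `U` is multiplication by `X`; it maps `V_k` into `V_{k+1}`, and `V_k ∩ X V_k = X V_{k-1}`
for `k ≤ D`. Given `dim V_k = (k - N₁) + (k - N₂)`, the shifts of a nonzero `v ∈ V_{N₁+1}` fill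
`V_k` for `k ≤ N₂` by counting dimensions, and one more vector `w` completes them to `V_{N₂+1}`.
For `N₂ < k < D`, `dim (V_k + X V_k) ≥ 2 dim V_k - dim V_{k-1} = dim V_{k+1}`, so
`V_{k+1} = V_k + X V_k`; hence the shifts of `v` and `w` span every `V_k`, and as there are exactly
`dim V_k` of them, they form a basis.
-/

open Polynomial Module Submodule

section LinearAlgebra

variable {K M : Type*} [Field K] [AddCommGroup M] [Module K M]

theorem span_eq_of_linearIndependent_of_card_eq_finrank {ι : Type*} [Fintype ι] {g : ι → M}
    {S : Submodule K M} [FiniteDimensional K S] (hg : LinearIndependent K g)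
    (hmem : ∀ i, g i ∈ S) (hcard : Fintype.card ι = finrank K S) :
    span K (Set.range g) = S :=
  eq_of_le_of_finrank_eq (span_le.2 (Set.range_subset_iff.2 hmem))
    (by rw [finrank_span_eq_card hg, hcard])

theorem exists_le_sup_span_singleton {S T : Submodule K M} [FiniteDimensional K T] (hST : S ≤ T)
    (hfin : finrank K T ≤ finrank K S + 1) : ∃ w ∈ T, T ≤ S ⊔ K ∙ w := by
  by_cases hTS : T ≤ S
  · exact ⟨0, zero_mem T, hTS.trans le_sup_left⟩
  obtain ⟨w, hwT, hwS⟩ := SetLike.not_le_iff_exists.1 hTS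
  have hle : S ⊔ K ∙ w ≤ T := sup_le hST (span_singleton_le_iff_mem _ _ |>.2 hwT)
  have hlt : S < S ⊔ K ∙ w :=
    lt_of_le_of_ne le_sup_left fun h => hwS (h ▸ mem_sup_right (mem_span_singleton_self w))
  have : FiniteDimensional K ↥(S ⊔ K ∙ w) := Submodule.finiteDimensional_of_le hle
  have hrank := finrank_lt_finrank_of_lt hlt
  exact ⟨w, hwT, (eq_of_le_of_finrank_le hle (by omega)).ge⟩

end LinearAlgebra

section HankelPolyKer

variable {K : Type*} [Field K]

theorem mem_degreeLT_iff_coeff {n : ℕ} {p : K[X]} :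
    p ∈ degreeLT K n ↔ ∀ m, n ≤ m → p.coeff m = 0 := by
  rw [mem_degreeLT, degree_lt_iff_coeff_zero]

def hankelPolyKer (A : K[X]) (D k : ℕ) : Submodule K K[X] where
  carrier := {p | p ∈ degreeLT K (k + 1) ∧ ∀ m, k ≤ m → m ≤ D → (p * A).coeff m = 0}
  add_mem' hp hq := ⟨add_mem hp.1 hq.1, fun m h₁ h₂ => by
    rw [add_mul, coeff_add, hp.2 m h₁ h₂, hq.2 m h₁ h₂, add_zero]⟩
  zero_mem' := ⟨zero_mem _, fun m _ _ => by rw [zero_mul, coeff_zero]⟩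
  smul_mem' c p hp := ⟨smul_mem _ c hp.1, fun m h₁ h₂ => by
    rw [smul_mul_assoc, coeff_smul, hp.2 m h₁ h₂, smul_zero]⟩

variable {A : K[X]} {D k : ℕ} {p : K[X]}

theorem mem_hankelPolyKer : p ∈ hankelPolyKer A D k ↔
    p ∈ degreeLT K (k + 1) ∧ ∀ m, k ≤ m → m ≤ D → (p * A).coeff m = 0 := Iff.rfl

theorem hankelPolyKer_le_degreeLT : hankelPolyKer A D k ≤ degreeLT K (k + 1) := fun _ hp => hp.1

instance : FiniteDimensional K (hankelPolyKer A D k) :=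
  haveI := (degreeLTEquiv K (k + 1)).symm.finiteDimensional
  Submodule.finiteDimensional_of_le hankelPolyKer_le_degreeLT

theorem hankelPolyKer_mono : Monotone (hankelPolyKer A D) :=
  monotone_nat_of_le_succ fun _ _ hp =>
    ⟨degreeLT_mono (by omega) hp.1, fun m h₁ h₂ => hp.2 m (by omega) h₂⟩

theorem X_mul_mem_hankelPolyKer (hp : p ∈ hankelPolyKer A D k) :
    X * p ∈ hankelPolyKer A D (k + 1) := by
  refine ⟨mem_degreeLT_iff_coeff.2 fun m hm => ?_, fun m h₁ h₂ => ?_⟩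
  · obtain ⟨m, rfl⟩ := Nat.exists_eq_add_of_le' (by omega : 1 ≤ m)
    rw [coeff_X_mul, mem_degreeLT_iff_coeff.1 hp.1 m (by omega)]
  · obtain ⟨m, rfl⟩ := Nat.exists_eq_add_of_le' (by omega : 1 ≤ m)
    rw [mul_assoc, coeff_X_mul, hp.2 m (by omega) (by omega)]

theorem X_pow_mul_mem_hankelPolyKer {n i : ℕ} (hp : p ∈ hankelPolyKer A D n) (hk : n + i ≤ k) :
    X ^ i * p ∈ hankelPolyKer A D k := by
  have hshift : ∀ j, X ^ j * p ∈ hankelPolyKer A D (n + j) := fun j => by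
    induction j with
    | zero => simpa using hp
    | succ j ih => simpa [pow_succ', mul_assoc, ← add_assoc] using X_mul_mem_hankelPolyKer ih
  exact hankelPolyKer_mono hk (hshift i)

theorem mem_hankelPolyKer_of_X_mul_mem (hkD : k + 1 ≤ D) (hp : p ∈ hankelPolyKer A D (k + 1))
    (hXp : X * p ∈ hankelPolyKer A D (k + 1)) : p ∈ hankelPolyKer A D k := by
  refine ⟨mem_degreeLT_iff_coeff.2 fun m hm => ?_, fun m h₁ h₂ => ?_⟩
  · rw [← coeff_X_mul, mem_degreeLT_iff_coeff.1 hXp.1 (m + 1) (by omega)]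
  · rcases h₂.lt_or_eq with h₂ | rfl
    · rw [← coeff_X_mul, ← mul_assoc, hXp.2 (m + 1) (by omega) (by omega)]
    · exact hp.2 m (by omega) le_rfl

theorem hankelPolyKer_sup_map_X_eq {j : ℕ} (hjD : j + 1 ≤ D)
    (hdim : finrank K (hankelPolyKer A D (j + 2)) + finrank K (hankelPolyKer A D j)
      ≤ 2 * finrank K (hankelPolyKer A D (j + 1))) :
    hankelPolyKer A D (j + 1) ⊔ (hankelPolyKer A D (j + 1)).map (LinearMap.mulLeft K X)
      = hankelPolyKer A D (j + 2) := by
  set mulX := LinearMap.mulLeft K (X : K[X])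
  set V := hankelPolyKer A D (j + 1)
  have hX : Function.Injective mulX := mul_right_injective₀ X_ne_zero
  have finrank_map (S : Submodule K K[X]) : finrank K (S.map mulX) = finrank K S :=
    (equivMapOfInjective mulX hX S).finrank_eq.symm
  have hle : V ⊔ V.map mulX ≤ hankelPolyKer A D (j + 2) :=
    sup_le (hankelPolyKer_mono (by omega)) (map_le_iff_le_comap.2 fun _ => X_mul_mem_hankelPolyKer)
  have hinf : V ⊓ V.map mulX ≤ (hankelPolyKer A D j).map mulX := by
    rintro _ ⟨hXp, p, hp, rfl⟩
    exact ⟨p, mem_hankelPolyKer_of_X_mul_mem hjD hp hXp, rfl⟩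
  have hsup_inf := finrank_sup_add_finrank_inf_eq V (V.map mulX)
  have hinf_le := Submodule.finrank_mono hinf
  rw [finrank_map] at hsup_inf hinf_le
  have : FiniteDimensional K ↥(V ⊔ V.map mulX) := Submodule.finiteDimensional_of_le hle
  exact eq_of_le_of_finrank_le hle (by omega)

end HankelPolyKer

section Shifts

variable {K : Type*} [Field K]

noncomputable def shifts (v : K[X]) (n : ℕ) : Fin n → K[X] := fun i => X ^ (i : ℕ) * v

variable {v : K[X]}

theorem linearIndependent_shifts (hv : v ≠ 0) (n : ℕ) : LinearIndependent K (shifts v n) := by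
  have hmonomials : LinearIndependent K fun i : Fin n => (X : K[X]) ^ (i : ℕ) := by
    simpa [X_pow_eq_monomial, Function.comp_def] using
      (basisMonomials K).linearIndependent.comp _ Fin.val_injective
  exact hmonomials.map' (LinearMap.mulRight K v)
    (LinearMap.ker_eq_bot.2 (mul_left_injective₀ hv))

theorem span_shifts_mono {m n : ℕ} (h : m ≤ n) :
    span K (Set.range (shifts v m)) ≤ span K (Set.range (shifts v n)) :=
  span_mono (Set.range_subset_iff.2 fun i => ⟨Fin.castLE h i, rfl⟩)

theorem map_X_span_shifts_le {m n : ℕ} (h : m + 1 ≤ n) :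
    (span K (Set.range (shifts v m))).map (LinearMap.mulLeft K X)
      ≤ span K (Set.range (shifts v n)) := by
  rw [map_span, span_le]
  rintro _ ⟨_, ⟨i, rfl⟩, rfl⟩
  exact subset_span ⟨⟨i + 1, by omega⟩, by simp [shifts, pow_succ', mul_assoc]⟩

theorem shifts_mem_hankelPolyKer {A : K[X]} {D N k : ℕ} (hv : v ∈ hankelPolyKer A D (N + 1))
    (i : Fin (k - N)) : shifts v (k - N) i ∈ hankelPolyKer A D k :=
  X_pow_mul_mem_hankelPolyKer hv (by have := i.isLt; omega)

end Shifts

section Structure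

variable {K : Type*} [Field K] {A : K[X]} {D N₁ N₂ : ℕ} {v : K[X]}

theorem exists_ne_zero_mem_hankelPolyKer (hN : N₁ ≤ N₂) (hsum : N₁ + N₂ = D) (hD : 1 ≤ D)
    (hd : ∀ k, 1 ≤ k → k ≤ D → finrank K (hankelPolyKer A D k) = (k - N₁) + (k - N₂)) :
    ∃ v ∈ hankelPolyKer A D (N₁ + 1), v ≠ 0 := by
  refine exists_mem_ne_zero_of_ne_bot fun hbot => ?_
  have := hd (N₁ + 1) (by omega) (by omega)
  rw [hbot, finrank_bot] at this
  omega

theorem span_shifts_eq_hankelPolyKer (hsum : N₁ + N₂ = D)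
    (hd : ∀ k, 1 ≤ k → k ≤ D → finrank K (hankelPolyKer A D k) = (k - N₁) + (k - N₂))
    (hv : v ∈ hankelPolyKer A D (N₁ + 1)) (hv0 : v ≠ 0) {k : ℕ} (hk₁ : N₁ < k) (hk₂ : k ≤ N₂) :
    span K (Set.range (shifts v (k - N₁))) = hankelPolyKer A D k :=
  span_eq_of_linearIndependent_of_card_eq_finrank (linearIndependent_shifts hv0 _)
    (shifts_mem_hankelPolyKer hv) (by rw [Fintype.card_fin, hd k (by omega) (by omega)]; omega)

theorem exists_hankelPolyKer_le_span_shifts_sup (hD : N₂ + 1 ≤ D)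
    (hd : ∀ k, 1 ≤ k → k ≤ D → finrank K (hankelPolyKer A D k) = (k - N₁) + (k - N₂))
    (hv : v ∈ hankelPolyKer A D (N₁ + 1)) (hv0 : v ≠ 0) :
    ∃ w ∈ hankelPolyKer A D (N₂ + 1),
      hankelPolyKer A D (N₂ + 1) ≤ span K (Set.range (shifts v (N₂ + 1 - N₁))) ⊔ K ∙ w := by
  refine exists_le_sup_span_singleton (span_le.2 (Set.range_subset_iff.2
    (shifts_mem_hankelPolyKer hv))) ?_
  rw [finrank_span_eq_card (linearIndependent_shifts hv0 _), Fintype.card_fin,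
    hd (N₂ + 1) (by omega) hD]
  omega

theorem hankelPolyKer_le_span_shifts_sup (hN : N₁ ≤ N₂) (hsum : N₁ + N₂ = D)
    (hd : ∀ k, 1 ≤ k → k ≤ D → finrank K (hankelPolyKer A D k) = (k - N₁) + (k - N₂))
    {w : K[X]}
    (hw : hankelPolyKer A D (N₂ + 1) ≤ span K (Set.range (shifts v (N₂ + 1 - N₁))) ⊔ K ∙ w)
    {k : ℕ} (hk₁ : N₂ < k) (hk₂ : k ≤ D) :
    hankelPolyKer A D k
      ≤ span K (Set.range (shifts v (k - N₁))) ⊔ span K (Set.range (shifts w (k - N₂))) := by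
  induction k, hk₁ using Nat.le_induction with
  | base =>
    refine hw.trans (sup_le_sup_left ?_ _)
    rw [span_singleton_le_iff_mem]
    exact subset_span ⟨⟨0, by omega⟩, by simp [shifts]⟩
  | succ k hk ih =>
    obtain ⟨j, rfl⟩ := Nat.exists_eq_add_of_le' (by omega : 1 ≤ k)
    rw [← hankelPolyKer_sup_map_X_eq (by omega) (by rw [hd _ (by omega) (by omega),
      hd _ (by omega) (by omega), hd _ (by omega) (by omega)]; omega)]
    have ih := ih (by omega)
    refine sup_le (ih.trans (sup_le_sup (span_shifts_mono (by omega))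
      (span_shifts_mono (by omega)))) ((map_mono ih).trans ?_)
    rw [Submodule.map_sup]
    exact sup_le_sup (map_X_span_shifts_le (by omega)) (map_X_span_shifts_le (by omega))

theorem exists_hankelPolyKer_bases (hN : N₁ ≤ N₂) (hsum : N₁ + N₂ = D)
    (hd : ∀ k, 1 ≤ k → k ≤ D → finrank K (hankelPolyKer A D k) = (k - N₁) + (k - N₂)) :
    ∃ v ∈ degreeLT K (N₁ + 2), ∃ w ∈ degreeLT K (N₂ + 2),
      (∀ k, N₁ < k → k ≤ N₂ → LinearIndependent K (shifts v (k - N₁)) ∧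
        span K (Set.range (shifts v (k - N₁))) = hankelPolyKer A D k) ∧
      (∀ k, N₂ < k → k ≤ D →
        LinearIndependent K (Sum.elim (shifts v (k - N₁)) (shifts w (k - N₂))) ∧
        span K (Set.range (Sum.elim (shifts v (k - N₁)) (shifts w (k - N₂))))
          = hankelPolyKer A D k) := by
  rcases Nat.eq_zero_or_pos D with rfl | hD
  · exact ⟨0, zero_mem _, 0, zero_mem _, fun k _ _ => by omega, fun k _ _ => by omega⟩
  obtain ⟨v, hv, hv0⟩ := exists_ne_zero_mem_hankelPolyKer hN hsum hD hd
  have hmid : ∀ k, N₁ < k → k ≤ N₂ → LinearIndependent K (shifts v (k - N₁)) ∧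
      span K (Set.range (shifts v (k - N₁))) = hankelPolyKer A D k := fun k hk₁ hk₂ =>
    ⟨linearIndependent_shifts hv0 _, span_shifts_eq_hankelPolyKer hsum hd hv hv0 hk₁ hk₂⟩
  rcases Nat.eq_zero_or_pos N₁ with hN₁ | hN₁
  · exact ⟨v, hankelPolyKer_le_degreeLT hv, 0, zero_mem _, hmid, fun k _ _ => by omega⟩
  obtain ⟨w, hw, hvw⟩ := exists_hankelPolyKer_le_span_shifts_sup (by omega) hd hv hv0
  refine ⟨v, hankelPolyKer_le_degreeLT hv, w, hankelPolyKer_le_degreeLT hw, hmid,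
    fun k hk₁ hk₂ => ?_⟩
  have hspan : span K (Set.range (Sum.elim (shifts v (k - N₁)) (shifts w (k - N₂))))
      = hankelPolyKer A D k := by
    rw [Set.Sum.elim_range, span_union]
    refine le_antisymm (sup_le ?_ ?_) (hankelPolyKer_le_span_shifts_sup hN hsum hd hvw hk₁ hk₂)
    · exact span_le.2 (Set.range_subset_iff.2 (shifts_mem_hankelPolyKer hv))
    · exact span_le.2 (Set.range_subset_iff.2 (shifts_mem_hankelPolyKer (N := N₂) hw))
  refine ⟨linearIndependent_iff_card_eq_finrank_span.2 ?_, hspan⟩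
  rw [Set.finrank, hspan, hd k (by omega) hk₂, Fintype.card_sum, Fintype.card_fin,
    Fintype.card_fin]

end Structure

section HankelMatrix

open scoped Matrix

variable {K : Type*} [Field K] (a : ℕ → K) (D : ℕ) {k : ℕ}

noncomputable def hankelPoly : K[X] := ∑ m ∈ Finset.range (D + 1), monomial m (a (D - m))

variable {a D}

theorem coeff_hankelPoly {m : ℕ} (hm : m ≤ D) : (hankelPoly a D).coeff m = a (D - m) := by
  rw [hankelPoly, finsetSum_coeff, Finset.sum_eq_single m]
  · exact coeff_monomial_same _ _
  · exact fun b _ hb => coeff_monomial_of_ne _ hb.symm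
  · exact fun h => (h (Finset.mem_range.2 (by omega))).elim

theorem hankel_mulVec_apply [DecidableEq K] (hk : k ≤ D) (u : Fin (k + 1) → K)
    (i : Fin (D - k + 1)) :
    (hankel a D k *ᵥ u) i = (ofFn (k + 1) u * hankelPoly a D).coeff (D - i) := by
  simp only [Matrix.mulVec, dotProduct, hankel]
  rw [ofFn_eq_sum_monomial u, Finset.sum_mul, finsetSum_coeff]
  refine Finset.sum_congr rfl fun j _ => ?_
  have hi := i.isLt
  have hj := j.isLt
  rw [← C_mul_X_pow_eq_monomial, mul_assoc, coeff_C_mul, coeff_X_pow_mul', if_pos (by omega),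
    coeff_hankelPoly (by omega), mul_comm]
  congr 2
  omega

theorem ker_hankel_eq_comap [DecidableEq K] (hk : k ≤ D) :
    LinearMap.ker (hankel a D k).mulVecLin
      = (hankelPolyKer (hankelPoly a D) D k).comap (ofFn (k + 1)) := by
  ext u
  simp only [LinearMap.mem_ker, Matrix.mulVecLin_apply, mem_comap, mem_hankelPolyKer,
    mem_degreeLT.2 (ofFn_degree_lt u), true_and, funext_iff, Pi.zero_apply,
    hankel_mulVec_apply hk]
  constructor
  · intro h m hm₁ hm₂
    simpa [Nat.sub_sub_self hm₂] using h ⟨D - m, by omega⟩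
  · intro h i
    exact h _ (by omega) (by omega)

theorem ofFn_toFn_of_mem_degreeLT [DecidableEq K] {n : ℕ} {p : K[X]} (hp : p ∈ degreeLT K n) :
    ofFn n (toFn n p) = p := by
  ext i
  rcases lt_or_ge i n with h | h
  · simp [h, toFn]
  · rw [ofFn_coeff_eq_zero_of_ge _ h, mem_degreeLT_iff_coeff.1 hp i h]

theorem finrank_ker_hankel (hk : k ≤ D) :
    finrank K (LinearMap.ker (hankel a D k).mulVecLin)
      = finrank K (hankelPolyKer (hankelPoly a D) D k) := by
  classical
  have hrange : hankelPolyKer (hankelPoly a D) D k ≤ LinearMap.range (ofFn (k + 1)) :=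
    fun p hp => ⟨toFn (k + 1) p, ofFn_toFn_of_mem_degreeLT (hankelPolyKer_le_degreeLT hp)⟩
  rw [ker_hankel_eq_comap hk, (equivMapOfInjective _ (injective_ofFn (k + 1)) _).finrank_eq,
    map_comap_eq, inf_eq_right.2 hrange]

theorem linearIndependent_toFn_and_ker_hankel_eq_span {ι : Type*} (hk : k ≤ D) {g : ι → K[X]}
    (hg : LinearIndependent K g)
    (hspan : span K (Set.range g) = hankelPolyKer (hankelPoly a D) D k) :
    LinearIndependent K (toFn (k + 1) ∘ g) ∧
      LinearMap.ker (hankel a D k).mulVecLin = span K (Set.range (toFn (k + 1) ∘ g)) := by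
  classical
  have hg' : ofFn (k + 1) ∘ toFn (k + 1) ∘ g = g := funext fun i => ofFn_toFn_of_mem_degreeLT
    (hankelPolyKer_le_degreeLT (hspan ▸ subset_span (Set.mem_range_self i)))
  refine ⟨LinearIndependent.of_comp (ofFn (k + 1)) (by rwa [hg']), ?_⟩
  calc LinearMap.ker (hankel a D k).mulVecLin
      = (span K (Set.range g)).comap (ofFn (k + 1)) := by rw [ker_hankel_eq_comap hk, hspan]
    _ = ((span K (Set.range (toFn (k + 1) ∘ g))).map (ofFn (k + 1))).comap (ofFn (k + 1)) := by
      rw [map_span, ← Set.range_comp, hg']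
    _ = span K (Set.range (toFn (k + 1) ∘ g)) := comap_map_eq_of_injective (injective_ofFn _) _

theorem shiftVec_pad_toFn {n : ℕ} {v : K[X]} (hv : v ∈ degreeLT K n) (m k : ℕ) :
    (fun i : Fin m => fun t : Fin (k + 1) => shiftVec (pad (toFn n v)) i.1 t.1)
      = toFn (k + 1) ∘ shifts v m := by
  have hpad : pad (toFn n v) = v.coeff := funext fun t => by
    unfold pad
    split_ifs with h
    · rfl
    · exact (mem_degreeLT_iff_coeff.1 hv t (by omega)).symm
  ext i t
  change shiftVec (pad (toFn n v)) i t = (X ^ (i : ℕ) * v).coeff t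
  rw [hpad, shiftVec, coeff_X_pow_mul']

end HankelMatrix

/-- Structure of the kernels of a Hankel family: U-chains of `v` and `w` give bases. -/
theorem stmt3 {K : Type*} [Field K] (D N₁ N₂ : ℕ) (a : ℕ → K)
    (hN : N₁ ≤ N₂) (hsum : N₁ + N₂ = D)
    (hdim : ∀ k, 1 ≤ k → k ≤ D →
      Module.finrank K (LinearMap.ker ((hankel a D k).mulVecLin))
        = max 0 (k - N₁) + max 0 (k - N₂)) :
    ∃ (v : Fin (N₁ + 2) → K) (w : Fin (N₂ + 2) → K),
      (∀ k, 1 ≤ k → k ≤ N₁ → LinearMap.ker ((hankel a D k).mulVecLin) = ⊥) ∧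
      (∀ k, N₁ < k → k ≤ N₂ →
        LinearIndependent K
          (fun i : Fin (k - N₁) => fun t : Fin (k + 1) => shiftVec (pad v) i.1 t.1) ∧
        LinearMap.ker ((hankel a D k).mulVecLin)
          = Submodule.span K (Set.range
              (fun i : Fin (k - N₁) => fun t : Fin (k + 1) => shiftVec (pad v) i.1 t.1))) ∧
      (∀ k, N₂ < k → k ≤ D →
        LinearIndependent K
          (Sum.elim
            (fun i : Fin (k - N₁) => fun t : Fin (k + 1) => shiftVec (pad v) i.1 t.1)
            (fun i : Fin (k - N₂) => fun t : Fin (k + 1) => shiftVec (pad w) i.1 t.1)) ∧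
        LinearMap.ker ((hankel a D k).mulVecLin)
          = Submodule.span K
              (Set.range
                (fun i : Fin (k - N₁) => fun t : Fin (k + 1) => shiftVec (pad v) i.1 t.1) ∪
               Set.range
                (fun i : Fin (k - N₂) => fun t : Fin (k + 1) => shiftVec (pad w) i.1 t.1))) := by
  have hd : ∀ k, 1 ≤ k → k ≤ D →
      Module.finrank K (hankelPolyKer (hankelPoly a D) D k) = (k - N₁) + (k - N₂) :=
    fun k hk₁ hk₂ => by rw [← finrank_ker_hankel hk₂, hdim k hk₁ hk₂, Nat.zero_max, Nat.zero_max]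
  obtain ⟨v, hv, w, hw, hmid, hup⟩ := exists_hankelPolyKer_bases hN hsum hd
  refine ⟨toFn (N₁ + 2) v, toFn (N₂ + 2) w, fun k hk₁ hk₂ => ?_, fun k hk₁ hk₂ => ?_,
    fun k hk₁ hk₂ => ?_⟩
  · rw [← Submodule.finrank_eq_zero, hdim k hk₁ (by omega), Nat.zero_max, Nat.zero_max]
    omega
  · rw [shiftVec_pad_toFn hv]
    exact linearIndependent_toFn_and_ker_hankel_eq_span (by omega) (hmid k hk₁ hk₂).1
      (hmid k hk₁ hk₂).2
  · rw [← Set.Sum.elim_range, shiftVec_pad_toFn hv, shiftVec_pad_toFn hw, ← Sum.comp_elim]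
    exact linearIndependent_toFn_and_ker_hankel_eq_span hk₂ (hup k hk₁ hk₂).1 (hup k hk₁ hk₂).2
end

section
/- Let a = (a_0,...,a_D) ∈ K^{D+1}, A = Σ_{i=0}^D a_i x^i, and let ω ∈ ker(H^k_a). Define r_0,...,r_{k−1} as the products of the top k−1 rows of the upper-triangular Hankel completion against ω (i.e., r_m = Σ_{j: m−k+j ≥ 0} a_{m−k+j} ω_j for 0 ≤ m ≤ k−1). Then A(x) · P_ω(1,x) ≡ Σ_{i=0}^{k−1} r_i x^i (mod x^{D+1}), i.e., (P_ω(1,x), Σ r_i x^i) is a rational reconstruction of A modulo x^{D+1}. -/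
open Polynomial Finset

namespace Polynomial

variable {R : Type*} [CommSemiring R]

theorem coeff_sum_range_C_mul_X_pow (f : ℕ → R) (n m : ℕ) :
    (∑ i ∈ range n, C (f i) * X ^ i).coeff m = if m < n then f m else 0 := by
  simp only [finsetSum_coeff, coeff_C_mul_X_pow, sum_ite_eq, mem_range]

theorem coeff_mul_sum_range_C_mul_X_pow_reflect (A : R[X]) (w : ℕ → R) (k d : ℕ) :
    (A * ∑ i ∈ range (k + 1), C (w (k - i)) * X ^ i).coeff d =
      ∑ j ∈ range (k + 1), (if k ≤ d + j then A.coeff (d + j - k) else 0) * w j := by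
  rw [← sum_range_reflect, mul_sum, finsetSum_coeff]
  refine sum_congr rfl fun j hj => ?_
  have hjk : j ≤ k := Nat.lt_succ_iff.mp (mem_range.mp hj)
  rw [Nat.add_sub_cancel, Nat.sub_sub_self hjk, mul_comm (C _), ← mul_assoc, coeff_mul_C,
    coeff_mul_X_pow']
  congr 1
  exact if_congr (by omega) (by congr 1; omega) rfl

theorem coeff_sum_range_mul_sum_range_reflect (a w : ℕ → R) {N k d : ℕ} (hd : d < N) :
    ((∑ i ∈ range N, C (a i) * X ^ i) * ∑ i ∈ range (k + 1), C (w (k - i)) * X ^ i).coeff d =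
      ∑ j ∈ range (k + 1), (if k ≤ d + j then a (d + j - k) else 0) * w j := by
  rw [coeff_mul_sum_range_C_mul_X_pow_reflect]
  refine sum_congr rfl fun j hj => congrArg (· * w j) (ite_congr rfl (fun _ => ?_) fun _ => rfl)
  have := mem_range.mp hj
  rw [coeff_sum_range_C_mul_X_pow, if_pos (by omega)]

end Polynomial

theorem hankel_mulVec_apply_s5 {K : Type*} [Field K] (a : ℕ → K) (D k : ℕ) (ω : Fin (k + 1) → K)
    (i : Fin (D - k + 1)) :
    (hankel a D k).mulVec ω i = ∑ j ∈ range (k + 1), a (i + j) * pad ω j := by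
  rw [← Fin.sum_univ_eq_sum_range (fun j => a (i + j) * pad ω j)]
  simp [Matrix.mulVec, dotProduct, hankel, pad, Fin.is_le]

theorem stmt5_general {K : Type*} [Field K] (D k : ℕ) (a : ℕ → K)
    (ω : Fin (k + 1) → K) (hω : (hankel a D k).mulVec ω = 0)
    (r : ℕ → K)
    (hr : ∀ m, m < k →
      r m = ∑ j ∈ Finset.range (k + 1),
        (if k ≤ m + j then a (m + j - k) else 0) * pad ω j) :
    (Polynomial.X : Polynomial K) ^ (D + 1) ∣
      ((∑ i ∈ Finset.range (D + 1), Polynomial.C (a i) * Polynomial.X ^ i) *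
        (∑ i ∈ Finset.range (k + 1), Polynomial.C (pad ω (k - i)) * Polynomial.X ^ i)
       - ∑ i ∈ Finset.range k, Polynomial.C (r i) * Polynomial.X ^ i) := by
  rw [X_pow_dvd_iff]
  intro d hd
  rw [coeff_sub, coeff_sum_range_mul_sum_range_reflect _ _ hd, coeff_sum_range_C_mul_X_pow,
    sub_eq_zero]
  by_cases hdk : d < k
  · rw [if_pos hdk, hr d hdk]
  · have hrow := congrFun hω ⟨d - k, by omega⟩
    rw [hankel_mulVec_apply_s5, Pi.zero_apply] at hrow
    rw [if_neg hdk]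
    refine (sum_congr rfl fun j _ => ?_).trans hrow
    rw [if_pos (by omega), Nat.sub_add_comm (by omega)]

/-- A kernel vector of `H^k_a` yields a rational reconstruction of `A` modulo `x^{D+1}`. -/
theorem stmt5 {K : Type*} [Field K] (D k : ℕ) (hk : 1 ≤ k) (hkD : k ≤ D) (a : ℕ → K)
    (ω : Fin (k + 1) → K) (hω : (hankel a D k).mulVec ω = 0)
    (r : ℕ → K)
    (hr : ∀ m, m < k →
      r m = ∑ j ∈ Finset.range (k + 1),
        (if k ≤ m + j then a (m + j - k) else 0) * pad ω j) :
    (Polynomial.X : Polynomial K) ^ (D + 1) ∣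
      ((∑ i ∈ Finset.range (D + 1), Polynomial.C (a i) * Polynomial.X ^ i) *
        (∑ i ∈ Finset.range (k + 1), Polynomial.C (pad ω (k - i)) * Polynomial.X ^ i)
       - ∑ i ∈ Finset.range k, Polynomial.C (r i) * Polynomial.X ^ i) :=
  stmt5_general D k a ω hω r hr
end

section
/- If (U,R) is a rational reconstruction of A = Σ_{i=0}^D a_i x^i modulo x^{D+1} with max(deg U, deg R + 1) ≤ N_2, then there exists a univariate polynomial Q ∈ K[x] such that Q·U_v = U and Q·R_v = R, where U_v = P_v(1,x) and R_v is the remainder of A·P_v(1,x) divided by x^{D+1}. -/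
/-!
Reading coefficient vectors backwards, the Hankel product `H^k_a · u` lists the coefficients of
degrees `k, …, D` of `A · U`, where `U` is the polynomial whose reversed coefficient vector is `u`.
So the congruence `A U ≡ R mod x^{D+1}` with `deg R < N₂` puts the reversed coefficients of `U` in
`ker H^{N₂}_a`, and setting `y = 1` in the factorization `P_u = P_μ · P_v` supplied by the kernel
structure gives `U = Q U_v`. Since `v ∈ ker H^{N₁+1}_a`, the remainder `R_v` has degree at most `N₁`,
so `Q R_v` and `R` are congruent modulo `x^{D+1}` and both of degree `≤ N₂ - 1 < D + 1`, hence equal.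
If `N₂ ≤ N₁`, the kernel of `H^{N₂}_a` is trivial, which forces `U = 0` and then `R = 0`.
-/

open Polynomial Finset

noncomputable def seqPoly {R : Type*} [Semiring R] (a : ℕ → R) (n : ℕ) : R[X] :=
  ∑ i ∈ range n, C (a i) * X ^ i

def revCoeffs {R : Type*} [Semiring R] (k : ℕ) (W : R[X]) : Fin (k + 1) → R :=
  fun j => W.coeff (k - j)

section Semiring

variable {R : Type*} [Semiring R]

theorem coeff_seqPoly (a : ℕ → R) (n m : ℕ) :
    (seqPoly a n).coeff m = if m < n then a m else 0 := by
  simp [seqPoly, coeff_C_mul, coeff_X_pow]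

theorem natDegree_seqPoly_succ_le (a : ℕ → R) (n : ℕ) : (seqPoly a (n + 1)).natDegree ≤ n := by
  rw [natDegree_le_iff_coeff_eq_zero]
  intro m hm
  rw [coeff_seqPoly, if_neg (by omega)]

theorem seqPoly_pad_revCoeffs {k : ℕ} {W : R[X]} (hW : W.natDegree ≤ k) :
    seqPoly (fun i => pad (revCoeffs k W) (k - i)) (k + 1) = W := by
  ext m
  rw [coeff_seqPoly]
  split_ifs with hm
  · simp [pad, revCoeffs, show k - m < k + 1 by omega, Nat.sub_sub_self (Nat.le_of_lt_succ hm)]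
  · exact (coeff_eq_zero_of_natDegree_lt (by omega)).symm

theorem eq_zero_of_revCoeffs_eq_zero {k : ℕ} {W : R[X]} (hW : W.natDegree ≤ k)
    (h : revCoeffs k W = 0) : W = 0 := by
  rw [← seqPoly_pad_revCoeffs hW, h]
  simp [seqPoly, pad]

theorem revCoeffs_seqPoly_pad {k : ℕ} (v : Fin (k + 1) → R) :
    revCoeffs k (seqPoly (fun i => pad v (k - i)) (k + 1)) = v := by
  funext j
  simp [revCoeffs, coeff_seqPoly, pad, Nat.sub_sub_self (Nat.le_of_lt_succ j.2)]

end Semiring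

theorem eq_of_X_pow_dvd_sub {R : Type*} [Ring R] {n : ℕ} {p q : R[X]} (h : X ^ n ∣ p - q)
    (hp : p.natDegree < n) (hq : q.natDegree < n) : p = q := by
  ext m
  by_cases hm : m < n
  · simpa [sub_eq_zero] using X_pow_dvd_iff.1 h m hm
  · rw [coeff_eq_zero_of_natDegree_lt (by omega), coeff_eq_zero_of_natDegree_lt (by omega)]

section Field

variable {K : Type*} [Field K]

theorem natDegree_mod_X_pow_le {n k : ℕ} {p : K[X]} (hp : ∀ m, k < m → m < n → p.coeff m = 0) :
    (p % X ^ n).natDegree ≤ k := by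
  rw [natDegree_le_iff_coeff_eq_zero]
  intro m hm
  by_cases hmn : m < n
  · have hdvd : X ^ n ∣ p - p % X ^ n := ⟨p / X ^ n, by rw [EuclideanDomain.mod_eq_sub_mul_div]; ring⟩
    simpa [sub_eq_zero, hp m hm hmn, eq_comm] using X_pow_dvd_iff.1 hdvd m hmn
  · apply coeff_eq_zero_of_degree_lt
    calc (p % X ^ n).degree < (X ^ n : K[X]).degree := degree_mod_lt p (pow_ne_zero n X_ne_zero)
      _ ≤ m := by rw [degree_X_pow]; exact_mod_cast not_lt.1 hmn

theorem mul_mod_X_pow_eq_of_dvd {n k : ℕ} {A V Q R : K[X]} (hrec : X ^ n ∣ A * (Q * V) - R)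
    (hR : R.natDegree < n) (hAV : ∀ m, k < m → m < n → (A * V).coeff m = 0)
    (hQ : Q.natDegree + k < n) :
    Q * (A * V % X ^ n) = R := by
  have hdvd : X ^ n ∣ A * V % X ^ n - A * V :=
    ⟨-(A * V / X ^ n), by rw [EuclideanDomain.mod_eq_sub_mul_div]; ring⟩
  refine eq_of_X_pow_dvd_sub ?_ ?_ hR
  · have : Q * (A * V % X ^ n) - R = Q * (A * V % X ^ n - A * V) + (A * (Q * V) - R) := by ring
    rw [this]
    exact dvd_add (dvd_mul_of_dvd_right hdvd Q) hrec
  · calc (Q * (A * V % X ^ n)).natDegree ≤ Q.natDegree + (A * V % X ^ n).natDegree :=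
          natDegree_mul_le
      _ ≤ Q.natDegree + k := by gcongr; exact natDegree_mod_X_pow_le hAV
      _ < n := hQ

theorem aeval_binForm (w : ℕ → K) (n : ℕ) :
    MvPolynomial.aeval ![(1 : K[X]), X] (binForm K w n) = seqPoly (fun i => w (n - i)) (n + 1) := by
  rw [seqPoly, ← sum_range_reflect]
  simp only [binForm, map_sum, map_mul, MvPolynomial.aeval_C, map_pow, MvPolynomial.aeval_X]
  refine sum_congr rfl fun i hi => ?_
  simp [Nat.sub_sub_self (mem_range_succ_iff.1 hi), algebraMap_eq]

theorem hankel_mulVec_revCoeffs_apply {a : ℕ → K} {D k : ℕ} {W : K[X]} (hk : k ≤ D)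
    (hW : W.natDegree ≤ k) (i : Fin (D - k + 1)) :
    ((hankel a D k).mulVec (revCoeffs k W)) i = (seqPoly a (D + 1) * W).coeff (k + i) := by
  have hlhs : (hankel a D k).mulVec (revCoeffs k W) i =
      ∑ j ∈ range (k + 1), W.coeff j * a (k + i - j) := by
    simp only [Matrix.mulVec, dotProduct, hankel, revCoeffs]
    rw [Fin.sum_univ_eq_sum_range (fun j => a (i + j) * W.coeff (k - j)), ← sum_range_reflect]
    refine sum_congr rfl fun j hj => ?_
    rw [mem_range] at hj
    rw [mul_comm]
    congr 2 <;> omega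
  rw [hlhs, mul_comm, coeff_mul, Nat.sum_antidiagonal_eq_sum_range_succ
    (fun p q => W.coeff p * (seqPoly a (D + 1)).coeff q), Nat.succ_eq_add_one,
    show k + i + 1 = k + 1 + i by omega, sum_range_add _ (k + 1)]
  have htail : ∑ j ∈ range i, W.coeff (k + 1 + j) * (seqPoly a (D + 1)).coeff (k + i - (k + 1 + j))
      = 0 :=
    sum_eq_zero fun j _ => by rw [coeff_eq_zero_of_natDegree_lt (by omega), zero_mul]
  rw [htail, add_zero]
  refine sum_congr rfl fun j hj => ?_
  rw [coeff_seqPoly, if_pos (by omega)]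

theorem hankel_mulVec_revCoeffs_eq_zero_iff {a : ℕ → K} {D k : ℕ} {W : K[X]} (hk : k ≤ D)
    (hW : W.natDegree ≤ k) :
    (hankel a D k).mulVec (revCoeffs k W) = 0 ↔
      ∀ m, k ≤ m → m ≤ D → (seqPoly a (D + 1) * W).coeff m = 0 := by
  constructor
  · intro h m hkm hmD
    simpa [hankel_mulVec_revCoeffs_apply hk hW, Nat.add_sub_cancel' hkm] using
      congrFun h ⟨m - k, by omega⟩
  · intro h
    funext i
    rw [hankel_mulVec_revCoeffs_apply hk hW]
    exact h _ (by omega) (by omega)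

end Field

theorem stmt10_general {K : Type*} [Field K] (D N₁ N₂ : ℕ) (a : ℕ → K)
    (hsum : N₁ + N₂ = D)
    (hdim : ∀ k, 1 ≤ k → k ≤ D →
      Module.finrank K (LinearMap.ker ((hankel a D k).mulVecLin))
        = max 0 (k - N₁) + max 0 (k - N₂))
    (v : Fin (N₁ + 2) → K)
    (hv : (hankel a D (N₁ + 1)).mulVec v = 0)
    (hvgen : ∀ k, N₁ < k → k ≤ N₂ → ∀ u : Fin (k + 1) → K,
        (hankel a D k).mulVec u = 0 →
        ∃ μ : Fin (k - N₁) → K,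
          binForm K (pad u) k
            = binForm K (pad μ) (k - N₁ - 1) * binForm K (pad v) (N₁ + 1))
    (A U R : Polynomial K)
    (hA : A = ∑ i ∈ Finset.range (D + 1), Polynomial.C (a i) * Polynomial.X ^ i)
    (hrec : (Polynomial.X : Polynomial K) ^ (D + 1) ∣ (A * U - R))
    (hdeg : max U.natDegree (R.natDegree + 1) ≤ N₂) :
    ∃ Q : Polynomial K,
      Q * (∑ i ∈ Finset.range (N₁ + 2),
            Polynomial.C (pad v (N₁ + 1 - i)) * Polynomial.X ^ i) = U ∧
      Q * ((A * ∑ i ∈ Finset.range (N₁ + 2),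
            Polynomial.C (pad v (N₁ + 1 - i)) * Polynomial.X ^ i)
          % (Polynomial.X : Polynomial K) ^ (D + 1)) = R := by
  change A = seqPoly a (D + 1) at hA
  change ∃ Q, Q * seqPoly (fun i => pad v (N₁ + 1 - i)) (N₁ + 1 + 1) = U ∧
    Q * (A * seqPoly (fun i => pad v (N₁ + 1 - i)) (N₁ + 1 + 1) % X ^ (D + 1)) = R
  have hU : U.natDegree ≤ N₂ := le_of_max_le_left hdeg
  have hR : R.natDegree < N₂ := le_of_max_le_right hdeg
  have hUker : (hankel a D N₂).mulVec (revCoeffs N₂ U) = 0 := by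
    rw [hankel_mulVec_revCoeffs_eq_zero_iff (by omega) hU, ← hA]
    intro m hm hmD
    simpa [coeff_eq_zero_of_natDegree_lt (hR.trans_le hm), sub_eq_zero] using
      X_pow_dvd_iff.1 hrec m (by omega)
  obtain hlt | hle := lt_or_ge N₁ N₂
  · obtain ⟨μ, hμ⟩ := hvgen N₂ hlt le_rfl _ hUker
    have hQ := congrArg (MvPolynomial.aeval ![(1 : K[X]), X]) hμ
    rw [map_mul, aeval_binForm, aeval_binForm, aeval_binForm, seqPoly_pad_revCoeffs hU] at hQ
    refine ⟨_, hQ.symm, mul_mod_X_pow_eq_of_dvd (k := N₁) (hQ ▸ hrec) (by omega) ?_ ?_⟩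
    · intro m hm hmD
      rw [hA]
      exact (hankel_mulVec_revCoeffs_eq_zero_iff (by omega) (natDegree_seqPoly_succ_le _ _)).1
        (by rwa [revCoeffs_seqPoly_pad]) m hm (by omega)
    · have := natDegree_seqPoly_succ_le (fun i => pad μ (N₂ - N₁ - 1 - i)) (N₂ - N₁ - 1)
      omega
  · have hker : LinearMap.ker (hankel a D N₂).mulVecLin = ⊥ := by
      rw [← Submodule.finrank_eq_zero, hdim N₂ (by omega) (by omega)]
      omega
    have hUker' : revCoeffs N₂ U ∈ LinearMap.ker (hankel a D N₂).mulVecLin := hUker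
    rw [hker, Submodule.mem_bot] at hUker'
    obtain rfl := eq_zero_of_revCoeffs_eq_zero hU hUker'
    have hR0 : R = 0 := (eq_of_X_pow_dvd_sub hrec (by simp) (by omega)).symm.trans (mul_zero A)
    exact ⟨0, zero_mul _, by rw [hR0, zero_mul]⟩

/-- Any low-degree rational reconstruction of `A` mod `x^{D+1}` is a multiple of `(U_v, R_v)`. -/
theorem stmt10 {K : Type*} [Field K] (D N₁ N₂ : ℕ) (a : ℕ → K)
    (hN : N₁ ≤ N₂) (hsum : N₁ + N₂ = D)
    (hdim : ∀ k, 1 ≤ k → k ≤ D →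
      Module.finrank K (LinearMap.ker ((hankel a D k).mulVecLin))
        = max 0 (k - N₁) + max 0 (k - N₂))
    (v : Fin (N₁ + 2) → K)
    (hv : (hankel a D (N₁ + 1)).mulVec v = 0) (hv0 : v ≠ 0)
    (hvgen : ∀ k, N₁ < k → k ≤ N₂ → ∀ u : Fin (k + 1) → K,
        (hankel a D k).mulVec u = 0 →
        ∃ μ : Fin (k - N₁) → K,
          binForm K (pad u) k
            = binForm K (pad μ) (k - N₁ - 1) * binForm K (pad v) (N₁ + 1))
    (A U R : Polynomial K)
    (hA : A = ∑ i ∈ Finset.range (D + 1), Polynomial.C (a i) * Polynomial.X ^ i)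
    (hrec : (Polynomial.X : Polynomial K) ^ (D + 1) ∣ (A * U - R))
    (hdeg : max U.natDegree (R.natDegree + 1) ≤ N₂) :
    ∃ Q : Polynomial K,
      Q * (∑ i ∈ Finset.range (N₁ + 2),
            Polynomial.C (pad v (N₁ + 1 - i)) * Polynomial.X ^ i) = U ∧
      Q * ((A * ∑ i ∈ Finset.range (N₁ + 2),
            Polynomial.C (pad v (N₁ + 1 - i)) * Polynomial.X ^ i)
          % (Polynomial.X : Polynomial K) ^ (D + 1)) = R :=
  stmt10_general D N₁ N₂ a hsum hdim v hv hvgen A U R hA hrec hdeg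
end

section
/- If N_1 = N_2 (so D = 2N_1 is even and the Hankel matrix H^{N_1}_a is square and invertible), then there is a unique rational reconstruction (U,R) of A modulo x^{D+1} with deg U ≤ D/2, deg R ≤ D/2 and R monic; moreover deg R = D/2, and the kernel polynomial P_v of ker(H^{N_1+1}_a) can be taken as U(y/x)·x^{D/2+1}. -/
open Polynomial Finset

namespace Stmt11Aux

variable {K : Type*} [Field K]

lemma coeff_trunc (b : ℕ → K) (N m : ℕ) :
    (∑ i ∈ range (N + 1), C (b i) * X ^ i).coeff m = if m ≤ N then b m else 0 := by
  rw [finset_sum_coeff]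
  simp only [coeff_C_mul, coeff_X_pow, mul_ite, mul_one, mul_zero]
  by_cases hm : m ≤ N
  · rw [if_pos hm, Finset.sum_eq_single m]
    · simp
    · intro t ht hne; rw [if_neg (by omega)]
    · intro h; exact absurd (Finset.mem_range.2 (by omega)) h
  · rw [if_neg hm, Finset.sum_eq_zero]
    intro t ht; rw [Finset.mem_range] at ht; rw [if_neg (by omega)]

lemma coeff_mul_eq (a : ℕ → K) (D n : ℕ) (U : K[X]) (hU : U.natDegree ≤ n)
    (m : ℕ) (hnm : n ≤ m) (hmD : m ≤ D) :
    ((∑ i ∈ range (D + 1), C (a i) * X ^ i) * U).coeff m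
      = ∑ t ∈ range (n + 1), a (m - n + t) * U.coeff (n - t) := by
  rw [Polynomial.coeff_mul, Finset.Nat.sum_antidiagonal_eq_sum_range_succ_mk]
  rw [← Finset.sum_range_reflect]
  rw [← Finset.sum_subset (Finset.range_subset_range.2 (by omega) : range (n+1) ⊆ range (m+1))]
  · conv_rhs => rw [← Finset.sum_range_reflect]
    refine Finset.sum_congr rfl fun k hk => ?_
    rw [Finset.mem_range] at hk
    rw [coeff_trunc]
    rw [show m + 1 - 1 - k = m - k by omega, show m - (m - k) = k by omega,
      show m - n + (n + 1 - 1 - k) = m - k by omega, show n - (n + 1 - 1 - k) = k by omega,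
      if_pos (by omega : m - k ≤ D)]
  · intro k hk hk'
    rw [Finset.mem_range] at hk
    rw [Finset.mem_range, not_lt] at hk'
    have : U.coeff (m - (m + 1 - 1 - k)) = 0 :=
      Polynomial.coeff_eq_zero_of_natDegree_lt (by omega)
    rw [this, mul_zero]

end Stmt11Aux


open Stmt11Aux

/-- The case `N₁ = N₂ = D/2`: a unique monic-remainder rational reconstruction of low
degree exists, its remainder has degree exactly `D/2`, and it yields the kernel
polynomial `P_v = U(y/x)·x^{D/2+1}` of `ker(H^{D/2+1}_a)`. -/
theorem stmt11 {K : Type*} [Field K] (D : ℕ) (hD2 : 2 ∣ D) (hD : 0 < D) (a : ℕ → K)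
    (hdim : ∀ k, 1 ≤ k → k ≤ D →
      Module.finrank K (LinearMap.ker ((hankel a D k).mulVecLin))
        = max 0 (k - D / 2) + max 0 (k - D / 2)) :
    ∃ UR : Polynomial K × Polynomial K,
      ((Polynomial.X : Polynomial K) ^ (D + 1) ∣
          ((∑ i ∈ Finset.range (D + 1), Polynomial.C (a i) * Polynomial.X ^ i) * UR.1
            - UR.2) ∧
        UR.1.natDegree ≤ D / 2 ∧ UR.2.natDegree ≤ D / 2 ∧ UR.2.Monic) ∧
      (∀ UR' : Polynomial K × Polynomial K,
        ((Polynomial.X : Polynomial K) ^ (D + 1) ∣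
            ((∑ i ∈ Finset.range (D + 1), Polynomial.C (a i) * Polynomial.X ^ i) * UR'.1
              - UR'.2) ∧
          UR'.1.natDegree ≤ D / 2 ∧ UR'.2.natDegree ≤ D / 2 ∧ UR'.2.Monic) → UR' = UR) ∧
      UR.2.natDegree = D / 2 ∧
      (hankel a D (D / 2 + 1)).mulVec
          (fun t : Fin (D / 2 + 2) => UR.1.coeff (D / 2 + 1 - t.1)) = 0 ∧
      (fun t : Fin (D / 2 + 2) => UR.1.coeff (D / 2 + 1 - t.1)) ≠ 0 := by
  have hn1 : 1 ≤ D / 2 := by omega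
  set n := D / 2 with hndef
  have hDn : D = 2 * n := by omega
  have hDmn : D - n = n := by omega
  -- unfold mulVec rows
  have mulVec_apply : ∀ (k : ℕ) (v : Fin (k+1) → K) (i : Fin (D - k + 1)),
      (hankel a D k).mulVec v i = ∑ j : Fin (k+1), a (i.1 + j.1) * v j := by
    intro k v i
    simp [Matrix.mulVec, dotProduct, hankel]
  -- injectivity of the square Hankel system
  have hker : LinearMap.ker ((hankel a D n).mulVecLin) = ⊥ := by
    have h := hdim n hn1 (by omega)
    simp only [Nat.sub_self, max_self, Nat.max_eq_right (Nat.zero_le _), Nat.sub_self,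
      add_zero] at h
    rw [← Submodule.finrank_eq_zero (R := K)]
    omega
  have hinj : Function.Injective ((hankel a D n).mulVecLin) :=
    LinearMap.ker_eq_bot.1 hker
  have hsurj : Function.Surjective ((hankel a D n).mulVecLin) := by
    refine (LinearMap.injective_iff_surjective_of_finrank_eq_finrank ?_).1 hinj
    rw [Module.finrank_fin_fun, Module.finrank_fin_fun]
    omega
  obtain ⟨w, hw⟩ := hsurj (fun i : Fin (D - n + 1) => if i.1 = 0 then (1 : K) else 0)
  have hsolve : ∀ v v' : Fin (n+1) → K,
      (hankel a D n).mulVec v = (hankel a D n).mulVec v' → v = v' := by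
    intro v v' h
    exact hinj (by rw [Matrix.mulVecLin_apply, Matrix.mulVecLin_apply, h])
  have Hw : ∀ i : Fin (D - n + 1),
      ∑ t ∈ range (n + 1), a (i.1 + t) * pad w t = if i.1 = 0 then (1:K) else 0 := by
    intro i
    have h := congrFun hw i
    rw [Matrix.mulVecLin_apply, mulVec_apply] at h
    rw [← h, ← Fin.sum_univ_eq_sum_range (fun t => a (i.1 + t) * pad w t) (n+1)]
    refine Finset.sum_congr rfl fun j _ => ?_
    congr 1
    simp [pad, j.2]
  set A : K[X] := ∑ i ∈ Finset.range (D + 1), Polynomial.C (a i) * Polynomial.X ^ i with hA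
  set U : K[X] := ∑ t ∈ range (n + 1), C (pad w t) * X ^ (n - t) with hU
  have coeff_U : ∀ j, U.coeff j = if j ≤ n then pad w (n - j) else 0 := by
    intro j
    rw [hU, finset_sum_coeff]
    simp only [coeff_C_mul, coeff_X_pow, mul_ite, mul_one, mul_zero]
    by_cases hj : j ≤ n
    · rw [if_pos hj, Finset.sum_eq_single (n - j)]
      · rw [if_pos (by omega)]
      · intro t ht hne; rw [Finset.mem_range] at ht; rw [if_neg (by omega)]
      · intro h; exact absurd (Finset.mem_range.2 (by omega)) h
    · rw [if_neg hj, Finset.sum_eq_zero]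
      intro t ht; rw [Finset.mem_range] at ht; rw [if_neg (by omega)]
  have hUdeg : U.natDegree ≤ n := by
    rw [Polynomial.natDegree_le_iff_coeff_eq_zero]
    intro N hN; rw [coeff_U, if_neg (by omega)]
  -- key coefficient formula for any U' of degree ≤ n, in terms of its reversed coeffs
  have hAU' : ∀ (U' : K[X]), U'.natDegree ≤ n → ∀ i : Fin (D - n + 1),
      (A * U').coeff (n + i.1)
        = ∑ j : Fin (n+1), a (i.1 + j.1) * (fun t : Fin (n+1) => U'.coeff (n - t.1)) j := by
    intro U' hU' i
    rw [hA, coeff_mul_eq a D n U' hU' (n + i.1) (by omega) (by omega)]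
    calc ∑ t ∈ range (n + 1), a (n + ↑i - n + t) * U'.coeff (n - t)
        = ∑ t ∈ range (n + 1), a (↑i + t) * U'.coeff (n - t) := by
          refine Finset.sum_congr rfl fun t _ => ?_
          rw [show n + i.1 - n + t = i.1 + t by omega]
      _ = ∑ j : Fin (n+1), a (↑i + ↑j) * (fun t : Fin (n+1) => U'.coeff (n - ↑t)) j :=
          (Fin.sum_univ_eq_sum_range (fun t => a (i.1 + t) * U'.coeff (n - t)) (n+1)).symm
  have hAU : ∀ m, n ≤ m → m ≤ D → (A * U).coeff m = if m = n then (1:K) else 0 := by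
    intro m hm hmD
    have hi : m - n < D - n + 1 := by omega
    have h' : (A * U).coeff (n + (m - n))
        = ∑ j : Fin (n+1), a ((m - n) + ↑j) * (fun t : Fin (n+1) => U.coeff (n - ↑t)) j :=
      hAU' U hUdeg ⟨m - n, hi⟩
    have h2 : ∑ t ∈ range (n + 1), a ((m - n) + t) * pad w t
        = if m - n = 0 then (1:K) else 0 := Hw ⟨m - n, hi⟩
    have h3 : (∑ j : Fin (n+1), a ((m - n) + ↑j) * (fun t : Fin (n+1) => U.coeff (n - ↑t)) j)
        = ∑ t ∈ range (n + 1), a ((m - n) + t) * pad w t := by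
      rw [← Fin.sum_univ_eq_sum_range (fun t => a ((m - n) + t) * pad w t) (n+1)]
      refine Finset.sum_congr rfl fun j _ => ?_
      show a ((m - n) + ↑j) * U.coeff (n - ↑j) = a ((m - n) + ↑j) * pad w ↑j
      rw [coeff_U, if_pos (by omega : n - j.1 ≤ n), show n - (n - j.1) = j.1 by omega]
    rw [show m = n + (m - n) from by omega, h', h3, h2]
    by_cases hmn : m - n = 0
    · rw [if_pos hmn, if_pos (by omega)]
    · rw [if_neg hmn, if_neg (by omega)]
  set R : K[X] := ∑ m ∈ range (n + 1), C ((A * U).coeff m) * X ^ m with hR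
  have coeff_R : ∀ m, R.coeff m = if m ≤ n then (A * U).coeff m else 0 := fun m =>
    coeff_trunc _ n m
  have hRn : R.coeff n = 1 := by rw [coeff_R, if_pos le_rfl, hAU n le_rfl (by omega), if_pos rfl]
  have hRdegle : R.natDegree ≤ n := by
    rw [Polynomial.natDegree_le_iff_coeff_eq_zero]
    intro N hN; rw [coeff_R, if_neg (by omega)]
  have hRdeg : R.natDegree = n :=
    le_antisymm hRdegle (Polynomial.le_natDegree_of_ne_zero (by rw [hRn]; exact one_ne_zero))
  have hRmon : R.Monic := by
    rw [Polynomial.Monic, Polynomial.leadingCoeff, hRdeg, hRn]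
  have hdvd : (X : K[X]) ^ (D + 1) ∣ A * U - R := by
    rw [Polynomial.X_pow_dvd_iff]
    intro d hd
    rw [coeff_sub, coeff_R]
    by_cases hdn : d ≤ n
    · rw [if_pos hdn, sub_self]
    · rw [if_neg hdn, hAU d (by omega) (by omega), if_neg (by omega), sub_zero]
  -- uniqueness
  have huniq : ∀ (U' R' : K[X]), (X : K[X]) ^ (D + 1) ∣ A * U' - R' →
      U'.natDegree ≤ n → R'.natDegree ≤ n → R'.Monic → U' = U ∧ R' = R := by
    intro U' R' hdvd' hU'deg hR'deg hR'mon
    have hcoe : ∀ m, m ≤ D → (A * U').coeff m = R'.coeff m := by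
      intro m hm
      have := (Polynomial.X_pow_dvd_iff.1 hdvd') m (by omega)
      rw [coeff_sub, sub_eq_zero] at this
      exact this
    have hR'n : R'.natDegree = n := by
      by_contra hne
      have hlt : R'.natDegree < n := lt_of_le_of_ne hR'deg hne
      have hz : (hankel a D n).mulVec (fun t : Fin (n+1) => U'.coeff (n - t.1))
          = (hankel a D n).mulVec 0 := by
        funext i
        rw [mulVec_apply, Matrix.mulVec_zero, ← hAU' U' hU'deg i,
          hcoe (n + i.1) (by omega), Pi.zero_apply]
        exact Polynomial.coeff_eq_zero_of_natDegree_lt (by omega)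
      have hw0 := hsolve _ _ hz
      have hU'0 : U' = 0 := by
        ext j
        rw [Polynomial.coeff_zero]
        by_cases hj : j ≤ n
        · have := congrFun hw0 ⟨n - j, by omega⟩
          simpa [show n - (n - j) = j by omega] using this
        · exact Polynomial.coeff_eq_zero_of_natDegree_lt (by omega)
      have hR'0 : R' = 0 := by
        ext m
        rw [Polynomial.coeff_zero]
        by_cases hm : m ≤ D
        · rw [← hcoe m hm, hU'0, mul_zero, Polynomial.coeff_zero]
        · exact Polynomial.coeff_eq_zero_of_natDegree_lt (by omega)
      exact hR'mon.ne_zero hR'0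
    have hR'1 : R'.coeff n = 1 := by
      have := hR'mon
      rwa [Polynomial.Monic, Polynomial.leadingCoeff, hR'n] at this
    have hweq : (fun t : Fin (n+1) => U'.coeff (n - t.1)) = w := by
      refine hsolve _ _ ?_
      have hwmv : (hankel a D n).mulVec w
          = fun i : Fin (D - n + 1) => if i.1 = 0 then (1:K) else 0 := by
        rw [← Matrix.mulVecLin_apply, hw]
      funext i
      rw [mulVec_apply, ← hAU' U' hU'deg i, hcoe (n + i.1) (by omega), hwmv]
      show R'.coeff (n + ↑i) = if (i : ℕ) = 0 then (1:K) else 0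
      by_cases hi : i.1 = 0
      · rw [if_pos hi, show n + i.1 = n by omega, hR'1]
      · rw [if_neg hi]
        exact Polynomial.coeff_eq_zero_of_natDegree_lt (by omega)
    have hU'U : U' = U := by
      ext j
      by_cases hj : j ≤ n
      · have := congrFun hweq ⟨n - j, by omega⟩
        simp only [show n - (n - j) = j by omega] at this
        rw [this, coeff_U, if_pos hj]
        simp [pad, Nat.lt_succ_iff, hj]
      · rw [Polynomial.coeff_eq_zero_of_natDegree_lt (by omega : U'.natDegree < j),
          Polynomial.coeff_eq_zero_of_natDegree_lt (by omega : U.natDegree < j)]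
    refine ⟨hU'U, ?_⟩
    ext m
    rw [coeff_R]
    by_cases hm : m ≤ n
    · rw [if_pos hm, ← hU'U, ← hcoe m (by omega)]
    · rw [if_neg hm]
      exact Polynomial.coeff_eq_zero_of_natDegree_lt (by omega)
  -- the kernel vector statements
  have hDn1 : D - (n + 1) + 1 = n := by omega
  have hmv : (hankel a D (n + 1)).mulVec
      (fun t : Fin (n + 2) => U.coeff (n + 1 - t.1)) = 0 := by
    funext i
    have hi : (i : ℕ) < D - (n + 1) + 1 := i.2
    rw [mulVec_apply, Pi.zero_apply]
    calc ∑ j : Fin (n + 1 + 1), a (↑i + ↑j) * (fun t : Fin (n + 1 + 1) => U.coeff (n + 1 - ↑t)) j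
        = ∑ t ∈ range (n + 2), a (i.1 + t) * U.coeff (n + 1 - t) :=
          Fin.sum_univ_eq_sum_range (fun t => a (i.1 + t) * U.coeff (n + 1 - t)) (n+2)
      _ = (∑ t ∈ range (n + 1), a (i.1 + (t + 1)) * U.coeff (n + 1 - (t + 1)))
            + a (i.1 + 0) * U.coeff (n + 1 - 0) := Finset.sum_range_succ' _ (n + 1)
      _ = ∑ t ∈ range (n + 1), a (i.1 + (t + 1)) * U.coeff (n + 1 - (t + 1)) := by
          rw [coeff_U, if_neg (by omega), mul_zero, add_zero]
      _ = 0 := by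
          have hkey := hAU (n + 1 + i.1) (by omega) (by omega)
          rw [if_neg (by omega)] at hkey
          rw [hA, coeff_mul_eq a D n U hUdeg (n + 1 + i.1) (by omega) (by omega)] at hkey
          rw [← hkey]
          refine Finset.sum_congr rfl fun t ht => ?_
          rw [show n + 1 - (t + 1) = n - t by omega,
            show n + 1 + i.1 - n + t = i.1 + (t + 1) by omega]
  have hnz : (fun t : Fin (n + 2) => U.coeff (n + 1 - t.1)) ≠ 0 := by
    intro hv0
    have h1 : ∑ t ∈ range (n + 1), a (0 + t) * pad w t = if (0:ℕ) = 0 then (1:K) else 0 :=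
      Hw ⟨0, by omega⟩
    rw [if_pos rfl] at h1
    rw [Finset.sum_eq_zero] at h1
    · exact one_ne_zero h1.symm
    · intro t ht
      rw [Finset.mem_range] at ht
      have hvt : U.coeff (n + 1 - (t + 1)) = 0 := congrFun hv0 ⟨t + 1, by omega⟩
      rw [show n + 1 - (t + 1) = n - t by omega] at hvt
      have hpw : pad w t = U.coeff (n - t) := by
        rw [coeff_U, if_pos (by omega), show n - (n - t) = t by omega]
      rw [hpw, hvt, mul_zero]
  exact ⟨(U, R), ⟨hdvd, hUdeg, hRdegle, hRmon⟩,
    fun UR' h => by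
      obtain ⟨h1, h2⟩ := huniq UR'.1 UR'.2 h.1 h.2.1 h.2.2.1 h.2.2.2
      exact Prod.ext h1 h2,
    hRdeg, hmv, hnz⟩
end

section
/- Let P_v(x) and P_w(x) be relatively prime univariate polynomials over a field K of characteristic zero, of degrees N_1+1 and N_2+1 respectively with N_1 ≤ N_2. Let μ = (μ_0,...,μ_{N_2−N_1}) be indeterminates and Q_μ(x) = (Σ_i μ_i x^i)·P_v(x) + P_w(x). Then the discriminant of Q_μ with respect to x is a nonzero polynomial in K[μ_0,...,μ_{N_2−N_1}]; in particular there exists μ ∈ K^{N_2−N_1+1} such that Q_μ is square-free. -/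
/-!
Write `Q = μ₀ P_v + G` with `G = P_w + (∑_{i ≥ 1} μ_i x^i) P_v` and view it over `k(μ₀)`, where
`k = Frac K[μ₁, …, μₙ]`. A common root `α` of `Q` and `Q'` is a root of the Wronskian
`P_v G' - P_v' G`, which is nonzero in characteristic zero since `P_v` and `G` are coprime and `P_v`
is nonconstant. So `α` is algebraic over `k`, hence so is `μ₀ = -G(α) / P_v(α)`: absurd. Thus `Q`
is separable over `Frac K[μ]`, and clearing denominators in `a Q + b Q' = 1` gives `a Q + b Q' = Δ`
with `0 ≠ Δ ∈ K[μ]`; every `μ` with `Δ(μ) ≠ 0` makes `Q_μ` separable, hence square-free.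
-/
open Polynomial

theorem Polynomial.wronskian_ne_zero_of_isCoprime {k : Type*} [Field k] [CharZero k] {A B : k[X]}
    (hA : 0 < A.natDegree) (hAB : IsCoprime A B) : wronskian A B ≠ 0 := fun hW =>
  hA.ne' (derivative_eq_zero.mp (hAB.wronskian_eq_zero_iff.mp hW).1)

theorem Polynomial.separable_C_mul_map_add_map {k F : Type*} [Field k] [CharZero k] [Field F]
    [Algebra k F] {t : F} (ht : Transcendental k t) {A B : k[X]} (hA : 0 < A.natDegree)
    (hAB : IsCoprime A B) :
    (C t * A.map (algebraMap k F) + B.map (algebraMap k F)).Separable := by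
  rw [Separable, isCoprime_iff_aeval_ne_zero_of_isAlgClosed (k := F) (AlgebraicClosure F)]
  by_contra! h
  obtain ⟨α, hQ, hQ'⟩ := h
  set τ := algebraMap F (AlgebraicClosure F) t
  have hQ : τ * aeval α A + aeval α B = 0 := by simpa [aeval_map_algebraMap] using hQ
  have hQ' : τ * aeval α (derivative A) + aeval α (derivative B) = 0 := by
    simpa [derivative_map, aeval_map_algebraMap] using hQ'
  have hW : aeval α (wronskian A B) = 0 := by
    simp only [wronskian, map_sub, map_mul]
    linear_combination aeval α A * hQ' - aeval α (derivative A) * hQ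
  have hα : IsAlgebraic k α := ⟨_, wronskian_ne_zero_of_isCoprime hA hAB, hW⟩
  have ha : aeval α A ≠ 0 := fun ha =>
    (aeval_ne_zero_of_isCoprime hAB α).elim (· ha) (· (by linear_combination hQ - τ * ha))
  have hτα : τ ∈ IntermediateField.adjoin k {α} :=
    (IntermediateField.mem_adjoin_simple_iff _ _).mpr
      ⟨-B, A, by rw [map_neg, eq_div_iff ha]; linear_combination hQ⟩
  have hτ : IsAlgebraic k τ := mem_algebraicClosure_iff.mp <|
    IntermediateField.adjoin_simple_le_iff.mpr (mem_algebraicClosure_iff.mpr hα) hτα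
  exact ht ((isAlgebraic_algebraMap_iff (algebraMap F _).injective).mp hτ)

theorem Polynomial.exists_mul_add_mul_eq_C_of_isCoprime_map {R L : Type*} [CommRing R] [IsDomain R]
    [Field L] {θ : R →+* L} (hθ : Function.Injective θ) {p q : R[X]}
    (h : IsCoprime (p.map θ) (q.map θ)) :
    ∃ Δ : R, Δ ≠ 0 ∧ ∃ a b : R[X], a * p + b * q = C Δ := by
  set K := FractionRing R
  have hι : (IsFractionRing.lift hθ).comp (algebraMap R K) = θ := IsLocalization.lift_comp _
  obtain ⟨a, b, hab⟩ : IsCoprime (p.map (algebraMap R K)) (q.map (algebraMap R K)) := by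
    rwa [← isCoprime_map (IsFractionRing.lift hθ), map_map, map_map, hι]
  obtain ⟨ca, hca0, hca⟩ := IsLocalization.integerNormalization_spec (nonZeroDivisors R) a
  obtain ⟨cb, hcb0, hcb⟩ := IsLocalization.integerNormalization_spec (nonZeroDivisors R) b
  rw [← algebraMap_smul K, smul_eq_C_mul] at hca hcb
  refine ⟨ca * cb, mul_ne_zero (nonZeroDivisors.ne_zero hca0) (nonZeroDivisors.ne_zero hcb0),
    IsLocalization.integerNormalization (nonZeroDivisors R) a * C cb,
    IsLocalization.integerNormalization (nonZeroDivisors R) b * C ca, ?_⟩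
  apply map_injective (algebraMap R K) (IsFractionRing.injective _ _)
  simp only [Polynomial.map_add, Polynomial.map_mul, map_C, hca, hcb, map_mul]
  linear_combination C (algebraMap R K ca) * C (algebraMap R K cb) * hab

theorem Polynomial.separable_map_of_mul_add_mul_derivative_eq_C {R S : Type*} [CommRing R]
    [Field S] {Q a b : R[X]} {Δ : R} (h : a * Q + b * derivative Q = C Δ) (φ : R →+* S)
    (hΔ : φ Δ ≠ 0) : (Q.map φ).Separable := by
  have h := congrArg (map φ) h
  rw [Polynomial.map_add, Polynomial.map_mul, Polynomial.map_mul, ← derivative_map, map_C] at h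
  refine ⟨C (φ Δ)⁻¹ * a.map φ, C (φ Δ)⁻¹ * b.map φ, ?_⟩
  rw [mul_assoc, mul_assoc, ← mul_add, h, ← C_mul, inv_mul_cancel₀ hΔ, C_1]

section GenericPerturbation
variable {K : Type*} [Field K] (n : ℕ)

noncomputable def genericPerturbation (Pv Pw : K[X]) : (MvPolynomial (Fin (n + 1)) K)[X] :=
  (∑ i : Fin (n + 1), C (MvPolynomial.X i) * X ^ (i : ℕ)) * Pv.map MvPolynomial.C +
    Pw.map MvPolynomial.C

theorem map_eval_genericPerturbation (Pv Pw : K[X]) (μ : Fin (n + 1) → K) :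
    (genericPerturbation n Pv Pw).map (MvPolynomial.eval μ) =
      (∑ i : Fin (n + 1), C (μ i) * X ^ (i : ℕ)) * Pv + Pw := by
  have : (MvPolynomial.eval μ).comp MvPolynomial.C = RingHom.id K :=
    MvPolynomial.eval₂Hom_comp_C _ _
  simp [genericPerturbation, Polynomial.map_sum, Polynomial.map_map, this]

local notation "k" => FractionRing (MvPolynomial (Fin n) K)

variable (K) in
/-- Sends `μ₀` to the variable of `k(T)` and `μᵢ₊₁` to `μᵢ ∈ k`. -/
noncomputable def toRatFunc : MvPolynomial (Fin (n + 1)) K →ₐ[K] RatFunc k :=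
  (IsScalarTower.toAlgHom K k[X] (RatFunc k)).comp
    ((mapAlgHom (IsScalarTower.toAlgHom K _ k)).comp (MvPolynomial.finSuccEquiv K n).toAlgHom)

theorem toRatFunc_injective : Function.Injective (toRatFunc K n) :=
  (RatFunc.algebraMap_injective _).comp <|
    (map_injective _ (IsFractionRing.injective _ _)).comp (MvPolynomial.finSuccEquiv K n).injective

theorem toRatFunc_X_zero : toRatFunc K n (MvPolynomial.X 0) = RatFunc.X := by
  simp [toRatFunc, MvPolynomial.finSuccEquiv_X_zero]

variable {n} in
theorem toRatFunc_X_succ (i : Fin n) : toRatFunc K n (MvPolynomial.X i.succ) =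
    algebraMap k (RatFunc k) (algebraMap (MvPolynomial (Fin n) K) k (MvPolynomial.X i)) := by
  simp [toRatFunc, MvPolynomial.finSuccEquiv_X_succ, RatFunc.algebraMap_eq_C]

theorem map_toRatFunc_genericPerturbation (Pv Pw : K[X]) :
    (genericPerturbation n Pv Pw).map (toRatFunc K n) =
      C RatFunc.X * (Pv.map (algebraMap K k)).map (algebraMap k (RatFunc k)) +
        (Pw.map (algebraMap K k) +
          (∑ i : Fin n, C (algebraMap (MvPolynomial (Fin n) K) k (MvPolynomial.X i)) *
            X ^ ((i : ℕ) + 1)) * Pv.map (algebraMap K k)).map (algebraMap k (RatFunc k)) := by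
  have hC : (toRatFunc K n : MvPolynomial (Fin (n + 1)) K →+* RatFunc k).comp MvPolynomial.C =
      (algebraMap k (RatFunc k)).comp (algebraMap K k) := by
    rw [← IsScalarTower.algebraMap_eq, ← MvPolynomial.algebraMap_eq, AlgHom.comp_algebraMap]
  simp only [genericPerturbation, Fin.sum_univ_succ, Fin.val_zero, Fin.val_succ, pow_zero, mul_one,
    Polynomial.map_add, Polynomial.map_mul, Polynomial.map_sum, Polynomial.map_pow, map_C, map_X,
    map_map, hC, RingHom.coe_coe, toRatFunc_X_zero, toRatFunc_X_succ]
  ring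

theorem exists_mul_add_mul_derivative_genericPerturbation_eq_C [CharZero K] {Pv Pw : K[X]}
    (hv : 0 < Pv.natDegree) (hcop : IsCoprime Pv Pw) :
    ∃ Δ : MvPolynomial (Fin (n + 1)) K, Δ ≠ 0 ∧ ∃ a b : (MvPolynomial (Fin (n + 1)) K)[X],
      a * genericPerturbation n Pv Pw + b * derivative (genericPerturbation n Pv Pw) = C Δ := by
  have : CharZero k := charZero_of_injective_algebraMap (algebraMap K k).injective
  refine exists_mul_add_mul_eq_C_of_isCoprime_map
    (θ := (toRatFunc K n : MvPolynomial (Fin (n + 1)) K →+* RatFunc k)) (toRatFunc_injective n) ?_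
  rw [← derivative_map, map_toRatFunc_genericPerturbation]
  refine separable_C_mul_map_add_map RatFunc.transcendental_X ?_
    ((hcop.map (mapRingHom (algebraMap K k))).add_mul_right_right _)
  rwa [natDegree_map]

end GenericPerturbation

theorem stmt13_general {K : Type*} [Field K] [CharZero K] (N₁ N₂ : ℕ)
    (Pv Pw : Polynomial K)
    (hv : Pv.natDegree = N₁ + 1)
    (hcop : IsCoprime Pv Pw) :
    (∃ Δ : MvPolynomial (Fin (N₂ - N₁ + 1)) K, Δ ≠ 0 ∧
      ∀ μ : Fin (N₂ - N₁ + 1) → K,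
        ¬ Squarefree
            ((∑ i : Fin (N₂ - N₁ + 1), Polynomial.C (μ i) * Polynomial.X ^ (i : ℕ)) * Pv
              + Pw) →
        MvPolynomial.eval μ Δ = 0) ∧
    ∃ μ : Fin (N₂ - N₁ + 1) → K,
      Squarefree
        ((∑ i : Fin (N₂ - N₁ + 1), Polynomial.C (μ i) * Polynomial.X ^ (i : ℕ)) * Pv
          + Pw) := by
  obtain ⟨Δ, hΔ, a, b, hab⟩ :=
    exists_mul_add_mul_derivative_genericPerturbation_eq_C (N₂ - N₁) (by omega) hcop
  have hsqfree : ∀ μ, MvPolynomial.eval μ Δ ≠ 0 →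
      Squarefree ((∑ i : Fin (N₂ - N₁ + 1), C (μ i) * X ^ (i : ℕ)) * Pv + Pw) := fun μ hμ => by
    rw [← map_eval_genericPerturbation]
    exact (separable_map_of_mul_add_mul_derivative_eq_C hab _ hμ).squarefree
  obtain ⟨μ, hμ⟩ : ∃ μ, MvPolynomial.eval μ Δ ≠ 0 := by
    by_contra! h
    exact hΔ (MvPolynomial.funext fun μ => by simp [h μ])
  exact ⟨⟨Δ, hΔ, fun μ => not_imp_comm.mp (hsqfree μ)⟩, μ, hsqfree μ hμ⟩

/-- The discriminant of `Q_μ = P_μ·P_v + P_w` with respect to `x` is a nonzero polynomial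
in the `μ`'s; in particular some specialization `Q_μ` is square-free. -/
theorem stmt13 {K : Type*} [Field K] [CharZero K] (N₁ N₂ : ℕ) (hN : N₁ ≤ N₂)
    (Pv Pw : Polynomial K)
    (hv : Pv.natDegree = N₁ + 1) (hw : Pw.natDegree = N₂ + 1)
    (hcop : IsCoprime Pv Pw) :
    (∃ Δ : MvPolynomial (Fin (N₂ - N₁ + 1)) K, Δ ≠ 0 ∧
      ∀ μ : Fin (N₂ - N₁ + 1) → K,
        ¬ Squarefree
            ((∑ i : Fin (N₂ - N₁ + 1), Polynomial.C (μ i) * Polynomial.X ^ (i : ℕ)) * Pv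
              + Pw) →
        MvPolynomial.eval μ Δ = 0) ∧
    ∃ μ : Fin (N₂ - N₁ + 1) → K,
      Squarefree
        ((∑ i : Fin (N₂ - N₁ + 1), Polynomial.C (μ i) * Polynomial.X ^ (i : ℕ)) * Pv
          + Pw) :=
  stmt13_general N₁ N₂ Pv Pw hv hcop
end

section
/- Let P_v, P_w be coprime binary forms of degrees N_1+1 and N_2+1 (N_1 ≤ N_2) over a field K of characteristic zero. For every vector (μ_1,...,μ_{N_2−N_1}) ∈ K^{N_2−N_1} such that there exists μ_0 ∈ K for which y² does not divide Q_μ = P_μ·P_v + P_w (with P_μ = Σ_i μ_i x^i y^{N_2−N_1−i}), there are at most 2D+2 values of μ_0 ∈ K for which Q_μ is not square-free, where D = N_1 + N_2. -/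
noncomputable section Stmt14Helpers

open Polynomial

variable {K : Type*} [Field K]

noncomputable def psiK (K : Type*) [Field K] :
    MvPolynomial (Fin 2) K ≃ₐ[K] Polynomial (Polynomial K) :=
  (MvPolynomial.finSuccEquiv K 1).trans <| Polynomial.mapAlgEquiv <|
    (MvPolynomial.finSuccEquiv K 0).trans <|
      Polynomial.mapAlgEquiv (MvPolynomial.isEmptyAlgEquiv K (Fin 0))

lemma psiK_X0 : psiK K (MvPolynomial.X 0) = Polynomial.X := by
  rw [psiK]
  simp only [AlgEquiv.trans_apply, MvPolynomial.finSuccEquiv_X_zero]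
  rw [Polynomial.mapAlgEquiv]
  simp

lemma psiK_X1 : psiK K (MvPolynomial.X 1) = Polynomial.C Polynomial.X := by
  have h1 : (1 : Fin 2) = Fin.succ 0 := rfl
  rw [psiK, h1]
  simp only [AlgEquiv.trans_apply, MvPolynomial.finSuccEquiv_X_succ]
  rw [Polynomial.mapAlgEquiv]
  simp [MvPolynomial.finSuccEquiv_X_zero]

lemma psiK_C (c : K) : psiK K (MvPolynomial.C c) = Polynomial.C (Polynomial.C c) := by
  have h : (MvPolynomial.C c : MvPolynomial (Fin 2) K) = algebraMap K _ c := rfl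
  rw [h, AlgEquiv.commutes]
  rfl

/-- coefficient of a "sum of monomials" polynomial -/
lemma coeff_sum_CXpow {R : Type*} [CommRing R] (f : ℕ → R) (n j : ℕ) :
    (∑ i ∈ Finset.range (n + 1), Polynomial.C (f i) * Polynomial.X ^ i).coeff j =
      if j ≤ n then f j else 0 := by
  rw [Polynomial.finset_sum_coeff]
  simp only [Polynomial.coeff_C_mul, Polynomial.coeff_X_pow]
  by_cases h : j ≤ n
  · rw [Finset.sum_eq_single j (fun i _ hij => by rw [if_neg (Ne.symm hij), mul_zero])
      (fun hj => absurd (Finset.mem_range.mpr (by omega)) hj)]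
    rw [if_pos rfl, if_pos h, mul_one]
  · rw [if_neg h]
    refine Finset.sum_eq_zero fun i hi => ?_
    rw [if_neg (by rw [Finset.mem_range] at hi; omega), mul_zero]

lemma psiK_binForm (c : ℕ → K) (n : ℕ) :
    psiK K (binForm K c n) =
      ∑ i ∈ Finset.range (n + 1),
        Polynomial.C (Polynomial.C (c i) * Polynomial.X ^ (n - i)) * Polynomial.X ^ i := by
  rw [binForm, map_sum]
  refine Finset.sum_congr rfl fun i _ => ?_
  rw [map_mul, map_mul, map_pow, map_pow, psiK_X0, psiK_X1, psiK_C]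
  rw [← Polynomial.C_pow, Polynomial.C_mul]
  ring


/-- `F ∈ K[Y][X]` is (weakly) a binary form of degree `n`. -/
def IsHomT (n : ℕ) (F : Polynomial (Polynomial K)) : Prop :=
  (∀ i, ∃ e : K, F.coeff i = Polynomial.C e * Polynomial.X ^ (n - i)) ∧
    ∀ i, n < i → F.coeff i = 0

lemma IsHomT.add {n : ℕ} {F G : Polynomial (Polynomial K)} (hF : IsHomT n F)
    (hG : IsHomT n G) : IsHomT n (F + G) := by
  refine ⟨fun i => ?_, fun i hi => ?_⟩
  · obtain ⟨e, he⟩ := hF.1 i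
    obtain ⟨d, hd⟩ := hG.1 i
    exact ⟨e + d, by rw [Polynomial.coeff_add, he, hd, Polynomial.C_add]; ring⟩
  · rw [Polynomial.coeff_add, hF.2 i hi, hG.2 i hi, add_zero]

lemma IsHomT.natDegree_le {n : ℕ} {F : Polynomial (Polynomial K)} (hF : IsHomT n F) :
    F.natDegree ≤ n :=
  Polynomial.natDegree_le_iff_coeff_eq_zero.mpr hF.2

lemma IsHomT.mul {m p : ℕ} {F G : Polynomial (Polynomial K)} (hF : IsHomT m F)
    (hG : IsHomT p G) : IsHomT (m + p) (F * G) := by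
  constructor
  · intro k
    rw [Polynomial.coeff_mul]
    have : ∀ x ∈ Finset.HasAntidiagonal.antidiagonal k, ∃ e : K,
        F.coeff x.1 * G.coeff x.2 = Polynomial.C e * Polynomial.X ^ (m + p - k) := by
      rintro ⟨i, j⟩ hij
      rw [Finset.HasAntidiagonal.mem_antidiagonal] at hij
      by_cases hi : i ≤ m
      · by_cases hj : j ≤ p
        · obtain ⟨e, he⟩ := hF.1 i
          obtain ⟨d, hd⟩ := hG.1 j
          refine ⟨e * d, ?_⟩
          rw [he, hd]
          have : m - i + (p - j) = m + p - k := by omega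
          rw [Polynomial.C_mul]
          rw [mul_mul_mul_comm, ← pow_add, this]
        · exact ⟨0, by rw [hG.2 j (by omega), mul_zero, map_zero, zero_mul]⟩
      · exact ⟨0, by rw [hF.2 i (by omega), zero_mul, map_zero, zero_mul]⟩
    choose e he using this
    refine ⟨∑ x ∈ (Finset.HasAntidiagonal.antidiagonal k).attach, e x.1 x.2, ?_⟩
    rw [← Finset.sum_attach]
    rw [map_sum, Finset.sum_mul]
    exact Finset.sum_congr rfl fun x _ => he x.1 x.2
  · intro k hk
    have := Polynomial.natDegree_mul_le (p := F) (q := G)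
    exact Polynomial.coeff_eq_zero_of_natDegree_lt
      (lt_of_le_of_lt (le_trans Polynomial.natDegree_mul_le
        (add_le_add hF.natDegree_le hG.natDegree_le)) hk)

lemma isHomT_psiK_binForm (c : ℕ → K) (n : ℕ) : IsHomT n (psiK K (binForm K c n)) := by
  rw [psiK_binForm]
  constructor
  · intro i
    rw [coeff_sum_CXpow]
    by_cases h : i ≤ n
    · exact ⟨c i, by rw [if_pos h]⟩
    · exact ⟨0, by rw [if_neg h, map_zero, zero_mul]⟩
  · intro i hi
    rw [coeff_sum_CXpow, if_neg (by omega)]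

lemma isHomT_C_mul {n : ℕ} {F : Polynomial (Polynomial K)} (hF : IsHomT n F) (c : K) :
    IsHomT n (Polynomial.C (Polynomial.C c) * F) := by
  constructor
  · intro i
    obtain ⟨e, he⟩ := hF.1 i
    exact ⟨c * e, by rw [Polynomial.coeff_C_mul, he, Polynomial.C_mul]; ring⟩
  · intro i hi
    rw [Polynomial.coeff_C_mul, hF.2 i hi, mul_zero]

lemma isHomT_CXpow (m : ℕ) : IsHomT m (Polynomial.C ((Polynomial.X : Polynomial K) ^ m)) := by
  constructor
  · intro i
    by_cases h : i = 0
    · subst h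
      exact ⟨1, by rw [Polynomial.coeff_C_zero, map_one, one_mul, Nat.sub_zero]⟩
    · exact ⟨0, by rw [Polynomial.coeff_C, if_neg h, map_zero, zero_mul]⟩
  · intro i hi
    rw [Polynomial.coeff_C, if_neg (by omega)]


theorem squarefree_map_mulEquiv {R S : Type*} [Monoid R] [Monoid S] (e : R ≃* S) {r : R}
    (h : Squarefree r) : Squarefree (e r) := by
  intro z hz
  have h2 : e.symm z * e.symm z ∣ r := by
    have := map_dvd e.symm hz
    rwa [map_mul, MulEquiv.symm_apply_apply] at this
  have := (h _ h2).map e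
  rwa [MulEquiv.apply_symm_apply] at this

/-- scaling X ↦ c X as an algebra self-equivalence of K[X], for c ≠ 0 -/
noncomputable def scaleEquiv (c : K) (hc : c ≠ 0) : Polynomial K ≃ₐ[K] Polynomial K :=
  AlgEquiv.ofAlgHom (Polynomial.aeval (Polynomial.C c * Polynomial.X))
    (Polynomial.aeval (Polynomial.C c⁻¹ * Polynomial.X))
    (by
      apply Polynomial.algHom_ext
      simp only [AlgHom.coe_comp, Function.comp_apply, Polynomial.aeval_X, map_mul,
        Polynomial.aeval_C, AlgHom.coe_id, id_eq]
      have : (algebraMap K (Polynomial K)) c⁻¹ = Polynomial.C c⁻¹ := rfl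
      rw [this, ← mul_assoc, ← Polynomial.C_mul, inv_mul_cancel₀ hc, Polynomial.C_1, one_mul])
    (by
      apply Polynomial.algHom_ext
      simp only [AlgHom.coe_comp, Function.comp_apply, Polynomial.aeval_X, map_mul,
        Polynomial.aeval_C, AlgHom.coe_id, id_eq]
      have : (algebraMap K (Polynomial K)) c = Polynomial.C c := rfl
      rw [this, ← mul_assoc, ← Polynomial.C_mul, mul_inv_cancel₀ hc, Polynomial.C_1, one_mul])

lemma scaleEquiv_apply (c : K) (hc : c ≠ 0) (p : Polynomial K) :
    scaleEquiv c hc p = Polynomial.aeval (Polynomial.C c * Polynomial.X) p := rfl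

lemma coeff_aeval_CmulX (c : K) (q : Polynomial K) (j : ℕ) :
    (Polynomial.aeval (Polynomial.C c * Polynomial.X) q).coeff j = q.coeff j * c ^ j := by
  induction q using Polynomial.induction_on' with
  | add p r hp hr => rw [map_add, Polynomial.coeff_add, hp, hr, Polynomial.coeff_add, add_mul]
  | monomial k a =>
      rw [Polynomial.aeval_monomial, mul_pow, ← Polynomial.C_pow]
      have : (algebraMap K (Polynomial K)) a = Polynomial.C a := rfl
      rw [this, ← mul_assoc, ← Polynomial.C_mul, Polynomial.coeff_C_mul,
        Polynomial.coeff_X_pow, Polynomial.coeff_monomial]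
      by_cases h : k = j
      · subst h; rw [if_pos rfl, if_pos rfl, mul_one, mul_comm a (c ^ k)]
      · rw [if_neg h, if_neg (fun x => h x.symm), mul_zero, zero_mul]


lemma coeff_eq_of_isHomT {n : ℕ} {F : Polynomial (Polynomial K)} (hF : IsHomT n F) (i : ℕ) :
    F.coeff i = Polynomial.C ((F.map (Polynomial.evalRingHom (1 : K))).coeff i) *
      Polynomial.X ^ (n - i) := by
  obtain ⟨e, he⟩ := hF.1 i
  rw [Polynomial.coeff_map, he]
  simp

lemma coeff_dehom {n : ℕ} {F : Polynomial (Polynomial K)} (hF : IsHomT n F) (i : ℕ) (hi : n < i) :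
    (F.map (Polynomial.evalRingHom (1 : K))).coeff i = 0 := by
  rw [Polynomial.coeff_map, hF.2 i hi, map_zero]

lemma squarefree_of_dehom {n : ℕ} [CharZero K] (hn : 1 ≤ n) {F : Polynomial (Polynomial K)}
    (hF : IsHomT n F)
    (hq : Squarefree (F.map (Polynomial.evalRingHom (1 : K))))
    (hco : (F.map (Polynomial.evalRingHom (1 : K))).coeff n ≠ 0 ∨
           (F.map (Polynomial.evalRingHom (1 : K))).coeff (n - 1) ≠ 0) :
    Squarefree F := by
  set q := F.map (Polynomial.evalRingHom (1 : K)) with hqdef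
  intro p hp
  have key : ∀ s : K, s ≠ 0 → F.map (Polynomial.evalRingHom s) =
      Polynomial.C (s ^ n) * Polynomial.aeval (Polynomial.C s⁻¹ * Polynomial.X) q := by
    intro s hs
    ext j
    rw [Polynomial.coeff_map, Polynomial.coeff_C_mul, coeff_aeval_CmulX,
      coeff_eq_of_isHomT hF j]
    by_cases hj : j ≤ n
    · have : (Polynomial.evalRingHom s) (Polynomial.C (q.coeff j) * Polynomial.X ^ (n - j)) =
          q.coeff j * s ^ (n - j) := by simp
      rw [this, inv_pow, pow_sub₀ s hs hj]
      field_simp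
    · rw [coeff_dehom hF j (by omega)]
      simp
  have unit_s : ∀ s : K, s ≠ 0 → IsUnit (p.map (Polynomial.evalRingHom s)) := by
    intro s hs
    have hdvd : p.map (Polynomial.evalRingHom s) * p.map (Polynomial.evalRingHom s) ∣
        F.map (Polynomial.evalRingHom s) := by
      rw [← Polynomial.map_mul]
      exact Polynomial.map_dvd _ hp
    rw [key s hs] at hdvd
    have h1 : Squarefree (Polynomial.aeval (Polynomial.C s⁻¹ * Polynomial.X) q) := by
      have := squarefree_map_mulEquiv (scaleEquiv s⁻¹ (inv_ne_zero hs)).toMulEquiv hq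
      simpa [scaleEquiv_apply] using this
    have hu : IsUnit (Polynomial.C (s ^ n) : Polynomial K) :=
      Polynomial.isUnit_C.mpr (pow_ne_zero n hs).isUnit
    exact h1 _ ((hu.dvd_mul_left).mp hdvd)
  -- p is a constant polynomial
  have hcoeff : ∀ k, k ≠ 0 → p.coeff k = 0 := by
    intro k hk
    apply Polynomial.eq_zero_of_infinite_isRoot
    refine Set.Infinite.mono ?_ ((Set.finite_singleton (0 : K)).infinite_compl)
    intro s hs
    simp only [Set.mem_compl_iff, Set.mem_singleton_iff] at hs
    obtain ⟨c, -, hc⟩ := Polynomial.isUnit_iff.mp (unit_s s hs)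
    have h0 : (p.map (Polynomial.evalRingHom s)).coeff k = 0 := by
      rw [← hc, Polynomial.coeff_C, if_neg hk]
    rw [Polynomial.coeff_map] at h0
    exact h0
  have hpC : p = Polynomial.C (p.coeff 0) := by
    apply Polynomial.eq_C_of_natDegree_le_zero
    exact Polynomial.natDegree_le_iff_coeff_eq_zero.mpr fun N hN => hcoeff N (by omega)
  set p₀ := p.coeff 0 with hp₀
  have hdvd0 : ∀ i, p₀ * p₀ ∣ F.coeff i := by
    rw [hpC] at hp
    rw [← Polynomial.C_mul] at hp
    exact (Polynomial.C_dvd_iff_dvd_coeff _ _).mp hp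
  have hfin : IsUnit p₀ := by
    rcases hco with h | h
    · have hd := hdvd0 n
      rw [coeff_eq_of_isHomT hF n, Nat.sub_self, pow_zero, mul_one] at hd
      have hC : (Polynomial.C (q.coeff n) : Polynomial K) ≠ 0 := by
        simpa using h
      have hp₀ne : p₀ ≠ 0 := by
        intro h0
        rw [h0, zero_mul, zero_dvd_iff] at hd
        exact hC hd
      have := Polynomial.natDegree_le_of_dvd hd hC
      rw [Polynomial.natDegree_mul hp₀ne hp₀ne, Polynomial.natDegree_C] at this
      obtain ⟨c, hc⟩ : ∃ c, p₀ = Polynomial.C c :=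
        ⟨p₀.coeff 0, Polynomial.eq_C_of_natDegree_le_zero (by omega)⟩
      rw [hc]
      refine Polynomial.isUnit_C.mpr (Ne.isUnit fun h0 => hp₀ne ?_)
      rw [hc, h0, map_zero]
    · have hd := hdvd0 (n - 1)
      rw [coeff_eq_of_isHomT hF (n - 1)] at hd
      have hsub : n - (n - 1) = 1 := by omega
      rw [hsub, pow_one] at hd
      have hC : Polynomial.C (q.coeff (n - 1)) * (Polynomial.X : Polynomial K) ≠ 0 := by
        apply mul_ne_zero
        · simpa using h
        · exact Polynomial.X_ne_zero
      have hp₀ne : p₀ ≠ 0 := by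
        intro h0
        rw [h0, zero_mul, zero_dvd_iff] at hd
        exact hC hd
      have hdeg := Polynomial.natDegree_le_of_dvd hd hC
      have : (Polynomial.C (q.coeff (n - 1)) * (Polynomial.X : Polynomial K)).natDegree = 1 := by
        rw [Polynomial.natDegree_C_mul (by simpa using h), Polynomial.natDegree_X]
      rw [this, Polynomial.natDegree_mul hp₀ne hp₀ne] at hdeg
      obtain ⟨c, hc⟩ : ∃ c, p₀ = Polynomial.C c :=
        ⟨p₀.coeff 0, Polynomial.eq_C_of_natDegree_le_zero (by omega)⟩
      rw [hc]
      refine Polynomial.isUnit_C.mpr (Ne.isUnit fun h0 => hp₀ne ?_)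
      rw [hc, h0, map_zero]
  rw [hpC]
  exact Polynomial.isUnit_C.mpr hfin


lemma CY_sq_dvd {n : ℕ} (hn : 1 ≤ n) {F : Polynomial (Polynomial K)} (hF : IsHomT n F)
    (h0 : (F.map (Polynomial.evalRingHom (1 : K))).coeff n = 0)
    (h1 : (F.map (Polynomial.evalRingHom (1 : K))).coeff (n - 1) = 0) :
    (Polynomial.C (Polynomial.X : Polynomial K)) ^ 2 ∣ F := by
  rw [← Polynomial.C_pow, Polynomial.C_dvd_iff_dvd_coeff]
  intro i
  by_cases hi : n < i
  · rw [hF.2 i hi]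
    exact dvd_zero _
  · rw [coeff_eq_of_isHomT hF i]
    by_cases h3 : i = n - 1
    · rw [h3, h1, map_zero, zero_mul]
      exact dvd_zero _
    · by_cases h4 : i = n
      · rw [h4, h0, map_zero, zero_mul]
        exact dvd_zero _
      · exact Dvd.dvd.mul_left (pow_dvd_pow _ (by omega)) _

lemma root_set_ncard_le {F : Type*} [Field F] {p : Polynomial F} (hp : p ≠ 0) :
    {x | p.IsRoot x}.Finite ∧ {x | p.IsRoot x}.ncard ≤ p.natDegree := by
  classical
  have hset : {x | p.IsRoot x} = ↑p.roots.toFinset := by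
    ext x
    simp [Polynomial.mem_roots, hp, Polynomial.IsRoot]
  constructor
  · rw [hset]
    exact (p.roots.toFinset).finite_toSet
  · rw [hset, Set.ncard_coe_finset]
    exact le_trans (Multiset.toFinset_card_le _) (Polynomial.card_roots' p)

lemma exists_double_root {r : Polynomial K} (h : ¬ Squarefree r) :
    ∃ x : AlgebraicClosure K,
      (r.map (algebraMap K (AlgebraicClosure K))).eval x = 0 ∧
      ((Polynomial.derivative r).map (algebraMap K (AlgebraicClosure K))).eval x = 0 := by
  set L := AlgebraicClosure K
  rw [Squarefree] at h
  push_neg at h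
  obtain ⟨z, hz, hzu⟩ := h
  by_cases hr : r = 0
  · exact ⟨0, by simp [hr]⟩
  have hz0 : z ≠ 0 := by
    intro h0
    rw [h0, mul_zero, zero_dvd_iff] at hz
    exact hr hz
  have hdeg : (z.map (algebraMap K L)).degree ≠ 0 := by
    rw [Polynomial.degree_map]
    intro hc
    exact hzu (Polynomial.isUnit_iff_degree_eq_zero.mpr hc)
  obtain ⟨x, hx⟩ := IsAlgClosed.exists_root _ hdeg
  have h1 : (Polynomial.X - Polynomial.C x) ∣ z.map (algebraMap K L) :=
    Polynomial.dvd_iff_isRoot.mpr hx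
  have h2 : (Polynomial.X - Polynomial.C x) ^ 2 ∣ r.map (algebraMap K L) := by
    refine dvd_trans (pow_dvd_pow_of_dvd h1 2) ?_
    rw [pow_two, ← Polynomial.map_mul]
    exact Polynomial.map_dvd _ hz
  obtain ⟨g, hg⟩ := h2
  refine ⟨x, ?_, ?_⟩
  · rw [hg]
    simp
  · rw [← Polynomial.derivative_map, hg]
    simp [Polynomial.derivative_mul, Polynomial.derivative_pow]

lemma bad_set_bound [CharZero K] {a b : Polynomial K} (hco : IsCoprime a b)
    (hW : a * Polynomial.derivative b - Polynomial.derivative a * b ≠ 0) :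
    {μ : K | ¬ Squarefree (a + Polynomial.C μ * b)}.Finite ∧
    {μ : K | ¬ Squarefree (a + Polynomial.C μ * b)}.ncard ≤
      (a * Polynomial.derivative b - Polynomial.derivative a * b).natDegree := by
  classical
  set L := AlgebraicClosure K
  set ι : K →+* L := algebraMap K L with hι
  set W := a * Polynomial.derivative b - Polynomial.derivative a * b with hWdef
  set S := {μ : K | ¬ Squarefree (a + Polynomial.C μ * b)} with hSdef
  set aL := a.map ι with haL
  set bL := b.map ι with hbL
  have hWL : W.map ι ≠ 0 := Polynomial.map_ne_zero hW
  have hWLeq : W.map ι = aL * Polynomial.derivative bL - Polynomial.derivative aL * bL := by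
    rw [hWdef, Polynomial.map_sub, Polynomial.map_mul, Polynomial.map_mul,
      Polynomial.derivative_map, Polynomial.derivative_map]
  set P : K → L → Prop := fun μ x =>
    aL.eval x + ι μ * bL.eval x = 0 ∧
    (Polynomial.derivative aL).eval x + ι μ * (Polynomial.derivative bL).eval x = 0 with hPdef
  have hex : ∀ μ ∈ S, ∃ x, P μ x := by
    intro μ hμ
    obtain ⟨x, hx1, hx2⟩ := exists_double_root hμ
    refine ⟨x, ?_, ?_⟩
    · rw [Polynomial.map_add, Polynomial.map_mul, Polynomial.map_C, Polynomial.eval_add,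
        Polynomial.eval_mul, Polynomial.eval_C] at hx1
      exact hx1
    · have hder : Polynomial.derivative (a + Polynomial.C μ * b) =
          Polynomial.derivative a + Polynomial.C μ * Polynomial.derivative b := by
        rw [Polynomial.derivative_add, Polynomial.derivative_C_mul]
      rw [hder, Polynomial.map_add, Polynomial.map_mul, Polynomial.map_C, Polynomial.eval_add,
        Polynomial.eval_mul, Polynomial.eval_C] at hx2
      rw [haL, hbL, Polynomial.derivative_map, Polynomial.derivative_map]
      exact hx2
  set f : K → L := fun μ => if h : ∃ x, P μ x then h.choose else 0 with hfdef
  have hf : ∀ μ ∈ S, P μ (f μ) := by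
    intro μ hμ
    have h := hex μ hμ
    simp only [hfdef, dif_pos h]
    exact h.choose_spec
  have hbx : ∀ μ ∈ S, bL.eval (f μ) ≠ 0 := by
    intro μ hμ hb0
    have h1 := (hf μ hμ).1
    rw [hb0, mul_zero, add_zero] at h1
    obtain ⟨u, v, huv⟩ := hco.map (Polynomial.mapRingHom ι)
    have := congrArg (Polynomial.eval (f μ)) huv
    simp only [Polynomial.eval_add, Polynomial.eval_mul, Polynomial.eval_one,
      Polynomial.coe_mapRingHom] at this
    rw [← haL, ← hbL] at this
    rw [h1, hb0, mul_zero, mul_zero, add_zero] at this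
    exact zero_ne_one this
  have hmaps : Set.MapsTo f S {x | (W.map ι).IsRoot x} := by
    intro μ hμ
    obtain ⟨h1, h2⟩ := hf μ hμ
    simp only [Set.mem_setOf_eq, Polynomial.IsRoot, hWLeq, Polynomial.eval_sub,
      Polynomial.eval_mul]
    linear_combination (Polynomial.derivative bL).eval (f μ) * h1 - bL.eval (f μ) * h2
  have hinj : Set.InjOn f S := by
    intro μ hμ μ' hμ' hff
    have h1 := (hf μ hμ).1
    have h2 := (hf μ' hμ').1
    rw [hff] at h1
    have : (ι μ - ι μ') * bL.eval (f μ') = 0 := by linear_combination h1 - h2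
    rcases mul_eq_zero.mp this with h | h
    · exact ι.injective (by linear_combination h)
    · exact absurd h (hbx μ' hμ')
  obtain ⟨hfin, hcard⟩ := root_set_ncard_le hWL
  constructor
  · exact Set.Finite.of_finite_image (hfin.subset (Set.image_subset_iff.mpr hmaps)) hinj
  · calc S.ncard ≤ {x | (W.map ι).IsRoot x}.ncard :=
          Set.ncard_le_ncard_of_injOn f hmaps hinj hfin
      _ ≤ (W.map ι).natDegree := hcard
      _ = W.natDegree := Polynomial.natDegree_map ι

lemma eq_C_mul_of_wronskian_eq_zero [CharZero K] {a b : Polynomial K} (hb : b ≠ 0)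
    (hW : a * Polynomial.derivative b - Polynomial.derivative a * b = 0) :
    ∃ lam : K, a = Polynomial.C lam * b := by
  classical
  by_cases ha : a = 0
  · exact ⟨0, by rw [ha, map_zero, zero_mul]⟩
  set g := GCDMonoid.gcd a b with hgdef
  have hg : g ≠ 0 := by
    intro h
    exact hb ((gcd_eq_zero_iff a b).mp h).2
  have hA : g * (a / g) = a := EuclideanDomain.mul_div_cancel' hg (gcd_dvd_left a b)
  have hB : g * (b / g) = b := EuclideanDomain.mul_div_cancel' hg (gcd_dvd_right a b)
  set a1 := a / g with ha1
  set b1 := b / g with hb1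
  have hco : IsCoprime a1 b1 := isCoprime_div_gcd_div_gcd hb
  have hE : a1 * Polynomial.derivative b1 = Polynomial.derivative a1 * b1 := by
    have hW' : a * Polynomial.derivative b = Polynomial.derivative a * b := by
      linear_combination hW
    rw [← hA, ← hB] at hW'
    rw [Polynomial.derivative_mul, Polynomial.derivative_mul] at hW'
    have h2 : g * g * (a1 * Polynomial.derivative b1 - Polynomial.derivative a1 * b1) = 0 := by
      linear_combination hW'
    rcases mul_eq_zero.mp h2 with h | h
    · exact absurd h (mul_ne_zero hg hg)
    · linear_combination h
  have ha1' : a1 ≠ 0 := by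
    intro h
    rw [h, mul_zero] at hA
    exact ha hA.symm
  have hb1' : b1 ≠ 0 := by
    intro h
    rw [h, mul_zero] at hB
    exact hb hB.symm
  have hda : Polynomial.derivative a1 = 0 := by
    by_contra hd
    have hdvd : a1 ∣ Polynomial.derivative a1 :=
      hco.dvd_of_dvd_mul_right ⟨Polynomial.derivative b1, hE.symm⟩
    have := Polynomial.degree_le_of_dvd hdvd hd
    exact absurd this (not_le.mpr (Polynomial.degree_derivative_lt ha1'))
  have hdb : Polynomial.derivative b1 = 0 := by
    by_contra hd
    have hdvd : b1 ∣ Polynomial.derivative b1 := by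
      apply hco.symm.dvd_of_dvd_mul_right
      exact ⟨Polynomial.derivative a1, by linear_combination hE⟩
    have := Polynomial.degree_le_of_dvd hdvd hd
    exact absurd this (not_le.mpr (Polynomial.degree_derivative_lt hb1'))
  obtain ⟨c, hc⟩ : ∃ c, a1 = Polynomial.C c :=
    ⟨_, Polynomial.eq_C_of_natDegree_le_zero
      (le_of_eq (Polynomial.natDegree_eq_zero_of_derivative_eq_zero hda))⟩
  obtain ⟨d, hd⟩ : ∃ d, b1 = Polynomial.C d :=
    ⟨_, Polynomial.eq_C_of_natDegree_le_zero
      (le_of_eq (Polynomial.natDegree_eq_zero_of_derivative_eq_zero hdb))⟩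
  have hd0 : d ≠ 0 := by
    intro h
    rw [hd, h, map_zero] at hb1'
    exact hb1' rfl
  refine ⟨c * d⁻¹, ?_⟩
  have h1 : a = g * Polynomial.C c := by rw [← hA, hc]
  have h2 : b = g * Polynomial.C d := by rw [← hB, hd]
  have hcd : c * d⁻¹ * d = c := by field_simp
  calc a = g * Polynomial.C c := h1
    _ = g * Polynomial.C (c * d⁻¹ * d) := by rw [hcd]
    _ = Polynomial.C (c * d⁻¹) * (g * Polynomial.C d) := by rw [Polynomial.C_mul]; ring
    _ = Polynomial.C (c * d⁻¹) * b := by rw [← h2]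


/-- full dehomogenization ring hom: x ↦ X, y ↦ 1 -/
noncomputable def rho (K : Type*) [Field K] : MvPolynomial (Fin 2) K →+* Polynomial K :=
  (Polynomial.mapRingHom (Polynomial.evalRingHom (1 : K))).comp
    ((psiK K).toAlgHom.toRingHom)

lemma rho_apply (Q : MvPolynomial (Fin 2) K) :
    rho K Q = (psiK K Q).map (Polynomial.evalRingHom (1 : K)) := rfl

lemma rho_binForm (c : ℕ → K) (n : ℕ) :
    rho K (binForm K c n) =
      ∑ i ∈ Finset.range (n + 1), Polynomial.C (c i) * Polynomial.X ^ i := by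
  rw [rho_apply, psiK_binForm, Polynomial.map_sum]
  refine Finset.sum_congr rfl fun i _ => ?_
  rw [Polynomial.map_mul, Polynomial.map_C, Polynomial.map_pow, Polynomial.map_X]
  congr 1
  simp

lemma rho_binForm_coeff (c : ℕ → K) (n j : ℕ) :
    (rho K (binForm K c n)).coeff j = if j ≤ n then c j else 0 := by
  rw [rho_binForm, coeff_sum_CXpow]

lemma rho_X1 : rho K (MvPolynomial.X 1) = 1 := by
  rw [rho_apply, psiK_X1, Polynomial.map_C]
  simp

lemma linear_bad {c d : K} (h : ¬(c = 0 ∧ d = 0)) :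
    {t : K | c + t * d = 0}.Finite ∧ {t : K | c + t * d = 0}.ncard ≤ 1 := by
  set L : Polynomial K := Polynomial.C c + Polynomial.C d * Polynomial.X with hL
  have hLne : L ≠ 0 := by
    intro h0
    apply h
    constructor
    · have := congrArg (fun p => Polynomial.coeff p 0) h0
      simpa [hL] using this
    · have := congrArg (fun p => Polynomial.coeff p 1) h0
      simpa [hL] using this
  have hset : {t : K | c + t * d = 0} = {t | L.IsRoot t} := by
    ext t
    simp only [Set.mem_setOf_eq, Polynomial.IsRoot, hL, Polynomial.eval_add,
      Polynomial.eval_mul, Polynomial.eval_C, Polynomial.eval_X]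
    constructor <;> intro h' <;> linear_combination h'
  have hdeg : L.natDegree ≤ 1 := by
    refine le_trans (Polynomial.natDegree_add_le _ _) ?_
    simp only [Polynomial.natDegree_C, max_le_iff]
    refine ⟨Nat.zero_le _, le_trans (Polynomial.natDegree_mul_le) ?_⟩
    simp
  obtain ⟨h1, h2⟩ := root_set_ncard_le hLne
  rw [hset]
  exact ⟨h1, le_trans h2 hdeg⟩

lemma binForm_X1_dvd (c : ℕ → K) (k : ℕ) (hc : c k = 0) :
    MvPolynomial.X 1 ∣ binForm K c k := by
  rw [binForm]
  refine Finset.dvd_sum fun i hi => ?_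
  by_cases h : i = k
  · rw [h, hc, map_zero, zero_mul, zero_mul]
    exact dvd_zero _
  · have : k - i ≠ 0 := by
      rw [Finset.mem_range] at hi
      omega
    exact Dvd.dvd.mul_left (dvd_pow_self _ this) _

lemma not_isUnit_X1 : ¬ IsUnit (MvPolynomial.X 1 : MvPolynomial (Fin 2) K) := by
  intro h
  have h2 : IsUnit (psiK K (MvPolynomial.X 1)) := h.map (psiK K)
  rw [psiK_X1, Polynomial.isUnit_C] at h2
  have := Polynomial.isUnit_iff_degree_eq_zero.mp h2
  rw [Polynomial.degree_X] at this
  exact one_ne_zero this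

lemma squarefree_down {Q : MvPolynomial (Fin 2) K} (h : Squarefree (psiK K Q)) : Squarefree Q := by
  have := squarefree_map_mulEquiv (psiK K).symm.toRingEquiv.toMulEquiv h
  have heq : (psiK K).symm.toRingEquiv.toMulEquiv (psiK K Q) = Q := (psiK K).symm_apply_apply Q
  rwa [heq] at this


lemma binForm_dvd_of_dvd_rho (c : ℕ → K) (n : ℕ) (p : Polynomial K)
    (hp : p ∣ rho K (binForm K c n)) :
    binForm K p.coeff p.natDegree ∣ binForm K c n := by
  obtain ⟨r, hr⟩ := hp
  have hdeg : (rho K (binForm K c n)).natDegree ≤ n :=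
    Polynomial.natDegree_le_iff_coeff_eq_zero.mpr fun j hj => by
      rw [rho_binForm_coeff, if_neg (by omega)]
  have hrho_eq : ∀ (N : ℕ) (F G : MvPolynomial (Fin 2) K), IsHomT N (psiK K F) →
      IsHomT N (psiK K G) → rho K F = rho K G → F = G := by
    intro N F G hF hG hFG
    apply (psiK K).injective
    ext1 i
    rw [coeff_eq_of_isHomT hF i, coeff_eq_of_isHomT hG i]
    rw [← rho_apply, ← rho_apply, hFG]
  by_cases hpr : p * r = 0
  · have hz : binForm K c n = 0 := by
      refine hrho_eq n _ 0 (isHomT_psiK_binForm c n) ?_ ?_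
      · rw [map_zero]
        exact ⟨fun i => ⟨0, by simp⟩, fun i _ => by simp⟩
      · rw [map_zero, hr, hpr]
    rw [hz]
    exact dvd_zero _
  have hp0 : p ≠ 0 := fun h => hpr (by rw [h, zero_mul])
  have hr0 : r ≠ 0 := fun h => hpr (by rw [h, mul_zero])
  have hdpr := Polynomial.natDegree_mul hp0 hr0
  rw [← hr] at hdpr
  refine ⟨binForm K r.coeff (n - p.natDegree), ?_⟩
  refine hrho_eq n _ _ (isHomT_psiK_binForm c n) ?_ ?_
  · rw [map_mul]
    have := (isHomT_psiK_binForm p.coeff p.natDegree).mul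
      (isHomT_psiK_binForm r.coeff (n - p.natDegree))
    rwa [show p.natDegree + (n - p.natDegree) = n by omega] at this
  · rw [map_mul, hr]
    congr 1
    · ext j
      rw [rho_binForm_coeff]
      by_cases h : j ≤ p.natDegree
      · rw [if_pos h]
      · rw [if_neg h]
        exact Polynomial.coeff_eq_zero_of_natDegree_lt (by omega)
    · ext j
      rw [rho_binForm_coeff]
      by_cases h : j ≤ n - p.natDegree
      · rw [if_pos h]
      · rw [if_neg h]
        exact Polynomial.coeff_eq_zero_of_natDegree_lt (by omega)

end Stmt14Helpers

set_option maxHeartbeats 1000000 in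
/-- At most `2D+2` values of `μ₀` make `Q_μ = P_μ·P_v + P_w` non-square-free. -/
theorem stmt14 {K : Type*} [Field K] [CharZero K] (N₁ N₂ D : ℕ)
    (hN : N₁ ≤ N₂) (hD : D = N₁ + N₂)
    (v w : ℕ → K)
    (hcop : IsRelPrime (binForm K v (N₁ + 1)) (binForm K w (N₂ + 1)))
    (ν : ℕ → K)
    (hexists : ∃ μ₀ : K, ¬ (MvPolynomial.X 1 ^ 2 ∣
      (binForm K (fun t => if t = 0 then μ₀ else ν t) (N₂ - N₁) * binForm K v (N₁ + 1)
        + binForm K w (N₂ + 1)))) :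
    {μ₀ : K | ¬ Squarefree
      (binForm K (fun t => if t = 0 then μ₀ else ν t) (N₂ - N₁) * binForm K v (N₁ + 1)
        + binForm K w (N₂ + 1))}.Finite ∧
    {μ₀ : K | ¬ Squarefree
      (binForm K (fun t => if t = 0 then μ₀ else ν t) (N₂ - N₁) * binForm K v (N₁ + 1)
        + binForm K w (N₂ + 1))}.ncard ≤ 2 * D + 2 := by
  classical
  set n := N₂ + 1 with hn
  set m := N₂ - N₁ with hm
  have hn1 : 1 ≤ n := by omega
  have hmn : m + (N₁ + 1) = n := by omega
  set Pv := binForm K v (N₁ + 1) with hPv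
  set Pw := binForm K w (N₂ + 1) with hPw
  set Pν0 := binForm K (fun t => if t = 0 then 0 else ν t) m with hPν0
  set Aup := Pν0 * Pv + Pw with hAup
  set Bup := MvPolynomial.X 1 ^ m * Pv with hBup
  set Q : K → MvPolynomial (Fin 2) K := fun μ =>
    binForm K (fun t => if t = 0 then μ else ν t) (N₂ - N₁) * Pv + Pw with hQdef
  -- splitting the μ₀ coefficient
  have hsplit : ∀ μ : K, binForm K (fun t => if t = 0 then μ else ν t) m
      = MvPolynomial.C μ * MvPolynomial.X 1 ^ m + Pν0 := by
    intro μ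
    rw [hPν0, binForm, binForm, Finset.sum_range_succ', Finset.sum_range_succ']
    have h1 : ∀ μ' : K, ∑ i ∈ Finset.range m,
        MvPolynomial.C (if i + 1 = 0 then μ' else ν (i + 1)) * MvPolynomial.X 0 ^ (i + 1) *
          MvPolynomial.X 1 ^ (m - (i + 1)) =
        ∑ i ∈ Finset.range m, MvPolynomial.C (ν (i + 1)) * MvPolynomial.X 0 ^ (i + 1) *
          MvPolynomial.X 1 ^ (m - (i + 1)) := by
      intro μ'
      exact Finset.sum_congr rfl fun i _ => by rw [if_neg (Nat.succ_ne_zero i)]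
    simp only [Nat.add_one_ne_zero, if_false, ite_false, if_pos rfl, ite_true, pow_zero,
      mul_one, Nat.sub_zero, map_zero, zero_mul, add_zero]
    ring
  have hQeq : ∀ μ : K, Q μ = Aup + MvPolynomial.C μ * Bup := by
    intro μ
    rw [hQdef]
    simp only [← hm]
    rw [hsplit μ, hAup, hBup]
    ring
  -- homogeneity facts
  have hHomA : IsHomT n (psiK K Aup) := by
    rw [hAup, map_add, map_mul]
    exact (hmn ▸ (isHomT_psiK_binForm _ m).mul (isHomT_psiK_binForm v (N₁ + 1))).add
      (isHomT_psiK_binForm w n)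
  have hHomB : IsHomT n (psiK K Bup) := by
    rw [hBup, map_mul, map_pow, psiK_X1, ← Polynomial.C_pow]
    exact hmn ▸ (isHomT_CXpow m).mul (isHomT_psiK_binForm v (N₁ + 1))
  have hHomQ : ∀ μ : K, IsHomT n (psiK K (Q μ)) := by
    intro μ
    rw [hQeq μ, map_add, map_mul, psiK_C]
    exact hHomA.add (isHomT_C_mul hHomB μ)
  -- dehomogenizations
  set a := rho K Aup with ha
  set b := rho K Pv with hb
  have hrhoB : rho K Bup = b := by
    rw [hBup, map_mul, map_pow, rho_X1, one_pow, one_mul]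
  have hrhoC : ∀ μ : K, rho K (MvPolynomial.C μ) = Polynomial.C μ := by
    intro μ
    rw [rho_apply, psiK_C, Polynomial.map_C]
    simp
  have hFmap : ∀ μ : K, (psiK K (Q μ)).map (Polynomial.evalRingHom (1 : K)) =
      a + Polynomial.C μ * b := by
    intro μ
    have : rho K (Q μ) = a + Polynomial.C μ * b := by
      rw [hQeq μ, map_add, map_mul, hrhoC, hrhoB, ha]
    exact this
  -- b nonzero
  have hPv_ne : Pv ≠ 0 := by
    intro h0
    rw [h0] at hcop
    have hunit := isRelPrime_zero_left.mp hcop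
    have h2 : IsUnit (MvPolynomial.eval (fun _ => (0 : K)) Pw) := hunit.map _
    have h3 : MvPolynomial.eval (fun _ => (0 : K)) Pw = 0 := by
      rw [hPw, binForm, map_sum]
      refine Finset.sum_eq_zero fun i _ => ?_
      simp only [map_mul, map_pow, MvPolynomial.eval_C, MvPolynomial.eval_X]
      by_cases hi : i = 0
      · subst hi
        rw [pow_zero, Nat.sub_zero, zero_pow (by omega : N₂ + 1 ≠ 0)]
        ring
      · rw [zero_pow hi]
        ring
    rw [h3] at h2
    exact (not_isUnit_zero h2).elim
  have hbne : b ≠ 0 := by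
    intro h0
    apply hPv_ne
    rw [hPv, binForm]
    refine Finset.sum_eq_zero fun i hi => ?_
    have : v i = 0 := by
      have hc := rho_binForm_coeff v (N₁ + 1) i
      rw [← hPv, ← hb, h0, Polynomial.coeff_zero] at hc
      rw [Finset.mem_range] at hi
      rw [if_pos (by omega)] at hc
      exact hc.symm
    rw [this, map_zero, zero_mul, zero_mul]
  -- coprimality downstairs
  have hcop_low : IsCoprime b (rho K Pw) := by
    rw [← isRelPrime_iff_isCoprime]
    intro d hdb hdc
    have h1 := binForm_dvd_of_dvd_rho v (N₁ + 1) d hdb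
    have h2 := binForm_dvd_of_dvd_rho w (N₂ + 1) d hdc
    have hu := hcop h1 h2
    have := hu.map (rho K)
    rwa [rho_binForm, ← Polynomial.as_sum_range_C_mul_X_pow] at this
  have ha_eq : a = rho K Pw + b * rho K Pν0 := by
    rw [ha, hAup, map_add, map_mul, ← hb]
    ring
  have hco_ab : IsCoprime a b := by
    rw [ha_eq]
    exact hcop_low.symm.add_mul_left_left (rho K Pν0)
  -- the two bad sets
  set S1 := {μ : K | ¬ Squarefree (a + Polynomial.C μ * b)} with hS1
  set S2 := {μ : K | a.coeff n + μ * b.coeff n = 0 ∧ a.coeff N₂ + μ * b.coeff N₂ = 0} with hS2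
  have hcoeffq : ∀ (μ : K) (j : ℕ), (a + Polynomial.C μ * b).coeff j =
      a.coeff j + μ * b.coeff j := by
    intro μ j
    rw [Polynomial.coeff_add, Polynomial.coeff_C_mul]
  have hn1' : n - 1 = N₂ := by omega
  have hsub : {μ₀ : K | ¬ Squarefree (Q μ₀)} ⊆ S1 ∪ S2 := by
    intro μ hμ
    by_contra hnot
    rw [Set.mem_union] at hnot
    push_neg at hnot
    obtain ⟨h1, h2⟩ := hnot
    rw [hS1, Set.mem_setOf_eq, not_not] at h1
    rw [hS2, Set.mem_setOf_eq] at h2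
    apply hμ
    have hsq : Squarefree (psiK K (Q μ)) := by
      apply squarefree_of_dehom hn1 (hHomQ μ)
      · rw [hFmap μ]; exact h1
      · rw [hFmap μ, hn1', hcoeffq, hcoeffq]
        exact not_and_or.mp h2
    exact squarefree_down hsq
  -- S2 bound
  have hS2bound : S2.Finite ∧ S2.ncard ≤ 1 := by
    by_cases hall : (a.coeff n = 0 ∧ b.coeff n = 0) ∧ (a.coeff N₂ = 0 ∧ b.coeff N₂ = 0)
    · exfalso
      obtain ⟨μs, hμs⟩ := hexists
      apply hμs
      have hdvd : (Polynomial.C (Polynomial.X : Polynomial K)) ^ 2 ∣ psiK K (Q μs) := by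
        apply CY_sq_dvd hn1 (hHomQ μs)
        · rw [hFmap μs, hcoeffq, hall.1.1, hall.1.2, mul_zero, add_zero]
        · rw [hFmap μs, hn1', hcoeffq, hall.2.1, hall.2.2, mul_zero, add_zero]
      have h2 := map_dvd (psiK K).symm hdvd
      rw [map_pow, AlgEquiv.symm_apply_apply] at h2
      have h3 : (psiK K).symm (Polynomial.C (Polynomial.X : Polynomial K)) =
          MvPolynomial.X 1 := by
        rw [AlgEquiv.symm_apply_eq, psiK_X1]
      rw [h3] at h2
      exact h2
    · have hcase : ¬(a.coeff n = 0 ∧ b.coeff n = 0) ∨ ¬(a.coeff N₂ = 0 ∧ b.coeff N₂ = 0) := by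
        exact not_and_or.mp hall
      rcases hcase with h | h
      · obtain ⟨hf, hc⟩ := linear_bad h
        have hss : S2 ⊆ {t : K | a.coeff n + t * b.coeff n = 0} := fun t ht => ht.1
        exact ⟨hf.subset hss, le_trans (Set.ncard_le_ncard hss hf) hc⟩
      · obtain ⟨hf, hc⟩ := linear_bad h
        have hss : S2 ⊆ {t : K | a.coeff N₂ + t * b.coeff N₂ = 0} := fun t ht => ht.2
        exact ⟨hf.subset hss, le_trans (Set.ncard_le_ncard hss hf) hc⟩
  -- S1 bound
  set W := a * Polynomial.derivative b - Polynomial.derivative a * b with hW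
  have hS1bound : S1.Finite ∧ S1.ncard ≤ D + 1 := by
    by_cases hW0 : W = 0
    · exfalso
      obtain ⟨lam, hlam⟩ := eq_C_mul_of_wronskian_eq_zero hbne hW0
      have hpw_eq : rho K Pw = (Polynomial.C lam - rho K Pν0) * b := by
        have h := ha_eq
        rw [hlam] at h
        linear_combination -h
      have hbdvd : b ∣ rho K Pw := ⟨Polynomial.C lam - rho K Pν0, by rw [hpw_eq]; ring⟩
      have hbunit : IsUnit b := hcop_low.isUnit_of_dvd' (dvd_refl b) hbdvd
      obtain ⟨e, -, hbe⟩ := Polynomial.isUnit_iff.mp hbunit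
      have hv0 : v (N₁ + 1) = 0 := by
        have hc := rho_binForm_coeff v (N₁ + 1) (N₁ + 1)
        rw [← hPv, ← hb, ← hbe, Polynomial.coeff_C, if_neg (by omega : N₁ + 1 ≠ 0)] at hc
        rw [if_pos le_rfl] at hc
        exact hc.symm
      have hX1Pv : MvPolynomial.X 1 ∣ Pv := by
        rw [hPv]
        exact binForm_X1_dvd v (N₁ + 1) hv0
      have hw0 : w (N₂ + 1) = 0 := by
        have hdeg : (rho K Pw).natDegree < n := by
          rw [hpw_eq, ← hbe]
          calc ((Polynomial.C lam - rho K Pν0) * Polynomial.C e).natDegree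
              ≤ (Polynomial.C lam - rho K Pν0).natDegree + (Polynomial.C e).natDegree :=
                Polynomial.natDegree_mul_le
            _ ≤ m + 0 := by
                refine add_le_add ?_ (le_of_eq (Polynomial.natDegree_C e))
                refine le_trans (Polynomial.natDegree_sub_le _ _) ?_
                rw [Polynomial.natDegree_C]
                refine max_le (Nat.zero_le _) ?_
                refine Polynomial.natDegree_le_iff_coeff_eq_zero.mpr fun j hj => ?_
                rw [hPν0] at *
                rw [rho_binForm_coeff, if_neg (by omega)]
            _ < n := by omega
        have hc := rho_binForm_coeff w (N₂ + 1) (N₂ + 1)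
        rw [← hPw, if_pos le_rfl] at hc
        rw [Polynomial.coeff_eq_zero_of_natDegree_lt hdeg] at hc
        exact hc.symm
      have hX1Pw : MvPolynomial.X 1 ∣ Pw := by
        rw [hPw]
        exact binForm_X1_dvd w (N₂ + 1) hw0
      exact not_isUnit_X1 (hcop hX1Pv hX1Pw)
    · obtain ⟨hf, hc⟩ := bad_set_bound hco_ab hW0
      refine ⟨hf, le_trans hc ?_⟩
      have hdega : a.natDegree ≤ n := by
        rw [ha, rho_apply]
        exact le_trans Polynomial.natDegree_map_le hHomA.natDegree_le
      have hdegb : b.natDegree ≤ N₁ + 1 := by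
        refine Polynomial.natDegree_le_iff_coeff_eq_zero.mpr fun j hj => ?_
        rw [hb, hPv, rho_binForm_coeff, if_neg (by omega)]
      calc W.natDegree ≤ max (a * Polynomial.derivative b).natDegree
            (Polynomial.derivative a * b).natDegree := Polynomial.natDegree_sub_le _ _
        _ ≤ D + 1 := by
            refine max_le ?_ ?_
            · refine le_trans Polynomial.natDegree_mul_le ?_
              have := Polynomial.natDegree_derivative_le b
              omega
            · refine le_trans Polynomial.natDegree_mul_le ?_
              have := Polynomial.natDegree_derivative_le a
              omega
  -- assemble
  obtain ⟨hf1, hc1⟩ := hS1bound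
  obtain ⟨hf2, hc2⟩ := hS2bound
  have hfinU : (S1 ∪ S2).Finite := hf1.union hf2
  constructor
  · exact hfinU.subset hsub
  · calc {μ₀ : K | ¬ Squarefree (Q μ₀)}.ncard ≤ (S1 ∪ S2).ncard :=
        Set.ncard_le_ncard hsub hfinU
      _ ≤ S1.ncard + S2.ncard := Set.ncard_union_le _ _
      _ ≤ 2 * D + 2 := by omega
end

section
/- Let α_1,...,α_r be pairwise distinct elements of a field. The unique solution λ = (λ_1,...,λ_r) of the transposed Vandermonde system Σ_j α_j^i λ_j = a_i (0 ≤ i ≤ r−1) is given by λ_j = T(α_j)/Q'(α_j), where Q(x) = ∏_{i=1}^r (x − α_i), R(x) = Σ_{i=1}^r a_{r−i} x^{i−1}, and T(x) = Quo(Q(x)·R(x), x^r) is the quotient of Q·R by x^r (discarding terms of degree < r). -/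
open Polynomial Finset

/-- Kaltofen–Lakshman: the solution of a transposed Vandermonde system is given by
`λ_j = T(α_j)/Q'(α_j)` with `Q = ∏(x−α_i)`, `R = ∑ a_{r−i} x^{i−1}`,
`T = Quo(Q·R, x^r)`. -/
theorem stmt17 {K : Type*} [Field K] (r : ℕ) (α : Fin r → K)
    (hα : Function.Injective α)
    (a : Fin r → K) (lam : Fin r → K)
    (hsys : ∀ i : Fin r, ∑ j : Fin r, α j ^ (i : ℕ) * lam j = a i) :
    ∀ j : Fin r,
      lam j =
        Polynomial.eval (α j)
            ((∏ i : Fin r, (Polynomial.X - Polynomial.C (α i))) *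
              (∑ i : Fin r, Polynomial.C (a (Fin.rev i)) * Polynomial.X ^ (i : ℕ))
              /ₘ Polynomial.X ^ r)
          / Polynomial.eval (α j)
              (Polynomial.derivative (∏ i : Fin r, (Polynomial.X - Polynomial.C (α i)))) := by
  classical
  intro j
  have hr : 0 < r := j.pos
  set Q : Polynomial K := ∏ i : Fin r, (X - C (α i)) with hQ
  set S : Fin r → Polynomial K := fun k => ∏ i ∈ Finset.univ.erase k, (X - C (α i)) with hS
  have hQk : ∀ k : Fin r, Q = (X - C (α k)) * S k := by
    intro k
    rw [hQ, hS, ← Finset.prod_erase_mul _ _ (Finset.mem_univ k), mul_comm]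
  set Rp : Polynomial K := ∑ i : Fin r, C (a (Fin.rev i)) * X ^ (i : ℕ) with hRp
  -- geometric factor
  set G : Fin r → Polynomial K :=
    fun k => ∑ i ∈ Finset.range r, X ^ i * (C (α k)) ^ (r - 1 - i) with hG
  have hRval : Rp = ∑ k : Fin r, C (lam k) * G k := by
    rw [hRp]
    have : ∀ i : Fin r, C (a (Fin.rev i)) * X ^ (i : ℕ)
        = ∑ k : Fin r, C (lam k) * (X ^ (i : ℕ) * (C (α k)) ^ (r - 1 - (i : ℕ))) := by
      intro i
      rw [← hsys (Fin.rev i)]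
      rw [map_sum, Finset.sum_mul]
      refine Finset.sum_congr rfl fun k _ => ?_
      have hrev : ((Fin.rev i : Fin r) : ℕ) = r - 1 - (i : ℕ) := by
        simp [Fin.val_rev]; omega
      rw [hrev, map_mul, map_pow]
      ring
    rw [Finset.sum_congr rfl fun i _ => this i, Finset.sum_comm]
    refine Finset.sum_congr rfl fun k _ => ?_
    rw [hG, Finset.mul_sum, Fin.sum_univ_eq_sum_range
      (fun i => C (lam k) * (X ^ i * (C (α k)) ^ (r - 1 - i)))]
  have hGk : ∀ k : Fin r, G k * (X - C (α k)) = X ^ r - (C (α k)) ^ r := by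
    intro k; exact geom_sum₂_mul X (C (α k)) r
  -- the quotient polynomial and the remainder
  set P : Polynomial K := ∑ k : Fin r, C (lam k) * S k with hP
  set L : Polynomial K := -∑ k : Fin r, C (lam k) * (C (α k)) ^ r * S k with hL
  have key : L + X ^ r * P = Q * Rp := by
    rw [hRval, hP, hL, Finset.mul_sum, Finset.mul_sum]
    rw [neg_add_eq_sub, ← Finset.sum_sub_distrib]
    refine (Finset.sum_congr rfl fun k _ => ?_).symm
    rw [hQk k]
    have : (X - C (α k)) * S k * (C (lam k) * G k)
        = C (lam k) * (S k * (G k * (X - C (α k)))) := by ring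
    rw [this, hGk k]
    ring
  have hdegS : ∀ k : Fin r, (S k).degree ≤ (r - 1 : ℕ) := by
    intro k
    calc (S k).degree ≤ ∑ i ∈ Finset.univ.erase k, (X - C (α i)).degree :=
          Polynomial.degree_prod_le _ _
      _ ≤ ∑ _i ∈ Finset.univ.erase k, (1 : WithBot ℕ) := by
          refine Finset.sum_le_sum fun i _ => ?_
          exact le_of_eq (Polynomial.degree_X_sub_C _)
      _ = ((r - 1 : ℕ) : WithBot ℕ) := by
          rw [Finset.sum_const, Finset.card_erase_of_mem (Finset.mem_univ k)]
          simp [Finset.card_univ, nsmul_eq_mul, mul_one]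
  have hdegL : L.degree < (X ^ r : Polynomial K).degree := by
    rw [degree_X_pow, hL, degree_neg]
    refine lt_of_le_of_lt (Polynomial.degree_sum_le _ _) ?_
    rw [Finset.sup_lt_iff (by exact_mod_cast WithBot.bot_lt_coe r)]
    intro k _
    calc (C (lam k) * (C (α k)) ^ r * S k).degree
        ≤ (C (lam k) * (C (α k)) ^ r).degree + (S k).degree := Polynomial.degree_mul_le _ _
      _ ≤ 0 + ((r - 1 : ℕ) : WithBot ℕ) := by
          refine add_le_add ?_ (hdegS k)
          calc (C (lam k) * (C (α k)) ^ r).degree ≤ _ := Polynomial.degree_mul_le _ _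
            _ ≤ 0 + 0 := by
                refine add_le_add (Polynomial.degree_C_le) ?_
                calc ((C (α k)) ^ r).degree ≤ r • (C (α k)).degree :=
                      Polynomial.degree_pow_le _ _
                  _ ≤ r • 0 := nsmul_le_nsmul_right Polynomial.degree_C_le r
                  _ = 0 := smul_zero r
            _ = 0 := by rw [add_zero]
      _ = ((r - 1 : ℕ) : WithBot ℕ) := by rw [zero_add]
      _ < (r : WithBot ℕ) := by exact_mod_cast Nat.sub_lt hr one_pos
  have hquo : Q * Rp /ₘ X ^ r = P :=
    (Polynomial.div_modByMonic_unique P L (monic_X_pow r) ⟨key, hdegL⟩).1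
  -- evaluation of S k at α j
  have hSj : ∀ k : Fin r, k ≠ j → eval (α j) (S k) = 0 := by
    intro k hk
    rw [hS, eval_prod]
    refine Finset.prod_eq_zero (Finset.mem_erase.2 ⟨hk.symm, Finset.mem_univ j⟩) ?_
    simp
  have hevalP : eval (α j) P = lam j * eval (α j) (S j) := by
    rw [hP, eval_finset_sum]
    rw [Finset.sum_eq_single j]
    · simp
    · intro k _ hk
      simp [hSj k hk]
    · intro h; exact absurd (Finset.mem_univ j) h
  -- derivative of Q at α j
  have hderiv : eval (α j) (derivative Q) = eval (α j) (S j) := by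
    rw [hQk j, derivative_mul]
    simp
  have hSne : eval (α j) (S j) ≠ 0 := by
    rw [hS, eval_prod]
    refine Finset.prod_ne_zero_iff.2 fun i hi => ?_
    simp only [eval_sub, eval_X, eval_C, sub_ne_zero]
    exact fun h => (Finset.mem_erase.1 hi).1 (hα h.symm)
  rw [hquo, hevalP, hderiv, mul_div_assoc, div_self hSne, mul_one]
end
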